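/- arXiv:1503.03597 — 8 statements merged into one kernel-verified Lean document; each statement's English description precedes it below -/
import Mathlib

section
/- Let A be an M×N binary matrix and t ≥ 1. If the map sending each subset S ⊆ {1,...,N} of size at most t to its outcome vector is injective (i.e., distinct defective sets of size at most t always produce distinct outcome vectors), then A is (t−1)-disjunct. -/
/-- If the map sending each defective set of size at most `t` to its
outcome vector is injective, then the matrix is `(t-1)`-disjunct. -/
theorem injective_outcomes_imp_disjunct (M N t : ℕ) (ht : 1 ≤ t)
    (A : Matrix (Fin M) (Fin N) Bool)
    (hinj : ∀ S1 S2 : Finset (Fin N), S1.card ≤ t → S2.card ≤ t →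
      (fun j : Fin M => decide (∃ k ∈ S1, A j k = true)) =
        (fun j : Fin M => decide (∃ k ∈ S2, A j k = true)) →
      S1 = S2) :
    ∀ T : Finset (Fin N), T.card = t - 1 → ∀ i ∉ T,
      ¬ (Finset.univ.filter (fun j => A j i = true) ⊆
          T.biUnion fun k => Finset.univ.filter (fun j => A j k = true)) := by
  intro T hT i hi hsub
  have hc1 : T.card ≤ t := by omega
  have hc2 : (insert i T).card ≤ t := by
    rw [Finset.card_insert_of_notMem hi]; omega
  have heq : T = insert i T := by
    apply hinj T (insert i T) hc1 hc2
    funext j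
    congr 1
    apply propext
    constructor
    · rintro ⟨k, hk, hA⟩
      exact ⟨k, Finset.mem_insert_of_mem hk, hA⟩
    · rintro ⟨k, hk, hA⟩
      rcases Finset.mem_insert.mp hk with rfl | hk
      · have hj : j ∈ Finset.univ.filter (fun j => A j k = true) := by
          simp [hA]
        have := hsub hj
        simp only [Finset.mem_biUnion, Finset.mem_filter] at this
        obtain ⟨k', hk', _, hA'⟩ := this
        exact ⟨k', hk', hA'⟩
      · exact ⟨k, hk, hA⟩
  exact hi (heq ▸ Finset.mem_insert_self i T)
end

section
/- Let C be an (M,N,d,w) constant-weight binary code and let t be a positive integer with t ≤ N−1 and t·(2w − d) < 2w (equivalently t·(w − d/2) < w, i.e., t ≤ ⌊(w−1)/(w−d/2)⌋ when d is even). Then the M×N matrix whose columns are the codewords of C is t-disjunct. -/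
/-- Kautz–Singleton: an `(M,N,d,w)` constant-weight binary code with
`t·(2w − d) < 2w` (and `1 ≤ t ≤ N−1`) gives a `t`-disjunct matrix whose columns are
the codewords. -/
theorem constant_weight_code_gives_disjunct (M N d w t : ℕ)
    (c : Fin N → Fin M → Bool)
    (hinj : Function.Injective c)
    (hw : ∀ i, (Finset.univ.filter (fun j => c i j = true)).card = w)
    (hd : ∀ i j, i ≠ j → d ≤ hammingDist (c i) (c j))
    (ht1 : 1 ≤ t) (ht2 : t < N)
    (hcond : (t : ℤ) * (2 * (w : ℤ) - (d : ℤ)) < 2 * (w : ℤ)) :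
    ∀ T : Finset (Fin N), T.card = t → ∀ i ∉ T,
      ¬ (Finset.univ.filter (fun j => c i j = true) ⊆
          T.biUnion fun k => Finset.univ.filter (fun j => c k j = true)) := by
  intro T hT i hiT hsub
  set S : Fin N → Finset (Fin M) := fun k => Finset.univ.filter (fun j => c k j = true) with hS
  -- intersection bound
  have key : ∀ k ∈ T, 2 * ((S i ∩ S k).card : ℤ) + (d : ℤ) ≤ 2 * (w : ℤ) := by
    intro k hk
    have hik : i ≠ k := fun h => hiT (h ▸ hk)
    have hd' := hd i k hik
    have hdist : hammingDist (c i) (c k) = (S i \ S k).card + (S k \ S i).card := by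
      rw [hammingDist, ← Finset.card_union_of_disjoint disjoint_sdiff_sdiff]
      congr 1
      ext j
      simp only [hS, Finset.mem_filter, Finset.mem_union, Finset.mem_sdiff, Finset.mem_univ,
        true_and]
      cases h1 : c i j <;> cases h2 : c k j <;> simp
    have h1 : (S i \ S k).card + (S i ∩ S k).card = (S i).card :=
      Finset.card_sdiff_add_card_inter _ _
    have h2 : (S k \ S i).card + (S k ∩ S i).card = (S k).card :=
      Finset.card_sdiff_add_card_inter _ _
    rw [Finset.inter_comm (S k) (S i)] at h2
    have hwi : (S i).card = w := hw i
    have hwk : (S k).card = w := hw k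
    have hdd : (d : ℤ) ≤ ((S i \ S k).card : ℤ) + ((S k \ S i).card : ℤ) := by
      exact_mod_cast hdist ▸ hd'
    have h1' : ((S i \ S k).card : ℤ) + ((S i ∩ S k).card : ℤ) = (w : ℤ) := by
      exact_mod_cast h1.trans hwi
    have h2' : ((S k \ S i).card : ℤ) + ((S i ∩ S k).card : ℤ) = (w : ℤ) := by
      exact_mod_cast h2.trans hwk
    linarith
  -- covering bound
  have hcov : (S i).card ≤ ∑ k ∈ T, (S i ∩ S k).card := by
    have hsub2 : S i ⊆ T.biUnion (fun k => S i ∩ S k) := by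
      intro j hj
      have := hsub hj
      rw [Finset.mem_biUnion] at this ⊢
      obtain ⟨k, hk, hjk⟩ := this
      exact ⟨k, hk, Finset.mem_inter.mpr ⟨hj, hjk⟩⟩
    exact le_trans (Finset.card_le_card hsub2) (Finset.card_biUnion_le)
  have main : 2 * (w : ℤ) ≤ (t : ℤ) * (2 * (w : ℤ) - (d : ℤ)) := by
    have h1 : 2 * ((S i).card : ℤ) ≤ ∑ k ∈ T, 2 * ((S i ∩ S k).card : ℤ) := by
      rw [← Finset.mul_sum]
      have : ((S i).card : ℤ) ≤ ∑ k ∈ T, ((S i ∩ S k).card : ℤ) := by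
        exact_mod_cast hcov
      linarith
    have h2 : ∑ k ∈ T, 2 * ((S i ∩ S k).card : ℤ) ≤ ∑ k ∈ T, (2 * (w : ℤ) - (d : ℤ)) := by
      apply Finset.sum_le_sum
      intro k hk
      have := key k hk
      linarith
    rw [Finset.sum_const, hT, nsmul_eq_mul] at h2
    have hwi : ((S i).card : ℤ) = w := by exact_mod_cast hw i
    linarith
  linarith
end

section
/- Let c_1,...,c_N ∈ {0,1}^M all have Hamming weight w and let S ⊆ {1,...,N}. If for every i ∈ {1,...,N}\S one has ∑_{j∈S} (w − d_H(c_i,c_j)/2) < w, then for every i ∈ {1,...,N}\S the support of c_i is not contained in ∪_{j∈S} supp(c_j); consequently the disjunct decoder applied to the outcome vector of S recovers S exactly. -/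
/-- If for every `i ∉ S` we have `∑_{j∈S} (w − d_H(c_i,c_j)/2) < w`, then
no column outside `S` has its support contained in the union of supports of the columns
in `S`; consequently the disjunct decoder recovers `S` exactly. -/
theorem sum_condition_imp_exact_recovery (M N w : ℕ) (c : Fin N → Fin M → Bool)
    (hw : ∀ i, (Finset.univ.filter (fun j => c i j = true)).card = w)
    (S : Finset (Fin N))
    (hsum : ∀ i ∉ S,
      ∑ j ∈ S, ((w : ℝ) - (hammingDist (c i) (c j) : ℝ) / 2) < (w : ℝ)) :
    (∀ i ∉ S, ¬ (Finset.univ.filter (fun j => c i j = true) ⊆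
        S.biUnion fun k => Finset.univ.filter (fun j => c k j = true))) ∧
    Finset.univ.filter
        (fun i => ∀ j, c i j = true → ∃ k ∈ S, c k j = true) = S := by
  set A : Fin N → Finset (Fin M) := fun i => Finset.univ.filter (fun j => c i j = true) with hA
  -- key: (w:ℝ) - d/2 = card (A i ∩ A j)
  have key : ∀ i j, ((w : ℝ) - (hammingDist (c i) (c j) : ℝ) / 2) = ((A i ∩ A j).card : ℝ) := by
    intro i j
    have hset : (Finset.univ.filter fun x => c i x ≠ c j x) = (A i \ A j) ∪ (A j \ A i) := by
      ext x
      simp only [hA, Finset.mem_filter, Finset.mem_union, Finset.mem_sdiff, Finset.mem_univ,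
        true_and]
      cases h1 : c i x <;> cases h2 : c j x <;> simp
    have hd : hammingDist (c i) (c j) = (A i \ A j).card + (A j \ A i).card := by
      rw [hammingDist]
      rw [show ({x | c i x ≠ c j x} : Finset (Fin M)) = (A i \ A j) ∪ (A j \ A i) from hset]
      exact Finset.card_union_of_disjoint disjoint_sdiff_sdiff
    have h1 : (A i \ A j).card + (A i ∩ A j).card = (A i).card :=
      Finset.card_sdiff_add_card_inter _ _
    have h2 : (A j \ A i).card + (A j ∩ A i).card = (A j).card :=
      Finset.card_sdiff_add_card_inter _ _
    have h3 : A j ∩ A i = A i ∩ A j := Finset.inter_comm _ _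
    have hwi : (A i).card = w := hw i
    have hwj : (A j).card = w := hw j
    rw [h3] at h2
    have : (hammingDist (c i) (c j) : ℝ) + 2 * ((A i ∩ A j).card : ℝ) = 2 * w := by
      rw [hd]
      push_cast
      have := congrArg (Nat.cast (R := ℝ)) h1
      have := congrArg (Nat.cast (R := ℝ)) h2
      push_cast at *
      have hwi' := congrArg (Nat.cast (R := ℝ)) hwi
      have hwj' := congrArg (Nat.cast (R := ℝ)) hwj
      linarith
    linarith
  have part1 : ∀ i ∉ S, ¬ (A i ⊆ S.biUnion fun k => A k) := by
    intro i hi hsub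
    have hle : (A i).card ≤ ∑ j ∈ S, (A i ∩ A j).card := by
      calc (A i).card ≤ (S.biUnion fun j => A i ∩ A j).card := by
            apply Finset.card_le_card
            intro x hx
            obtain ⟨j, hj, hxj⟩ := Finset.mem_biUnion.mp (hsub hx)
            exact Finset.mem_biUnion.mpr ⟨j, hj, Finset.mem_inter.mpr ⟨hx, hxj⟩⟩
        _ ≤ ∑ j ∈ S, (A i ∩ A j).card := Finset.card_biUnion_le
    have hlt := hsum i hi
    rw [Finset.sum_congr rfl (fun j _ => key i j)] at hlt
    have : (w : ℝ) ≤ ∑ j ∈ S, ((A i ∩ A j).card : ℝ) := by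
      rw [← hw i]
      exact_mod_cast hle
    linarith
  refine ⟨part1, ?_⟩
  ext i
  simp only [Finset.mem_filter, Finset.mem_univ, true_and]
  constructor
  · intro h
    by_contra hi
    apply part1 i hi
    intro x hx
    simp only [hA, Finset.mem_filter, Finset.mem_univ, true_and] at hx
    obtain ⟨k, hk, hck⟩ := h x hx
    exact Finset.mem_biUnion.mpr ⟨k, hk, by simp [hA, hck]⟩
  · intro hi j hj
    exact ⟨i, hi, hj⟩
end

section
/- Let C = {c_1,...,c_N} be an (M,N,d,w) constant-weight binary code with average distance D, let t be a positive integer with t ≤ N and w − t(w − D/2) > 0, and let ε ∈ (0,1). Suppose w − d/2 ≤ 3(w − t(w − D/2))² / (2(2t(w − D/2) + w)·ln(N/ε)). Then, if each index j ∈ {1,...,N} is independently declared defective with probability t/N, the probability that there exists a non-defective index i with supp(c_i) ⊆ ∪_{j defective} supp(c_j) is at most ε; hence the disjunct decoder identifies the random defective set exactly with probability at least 1 − ε. -/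
/-!
Fix an index `i` and let `S` be the random defective set. If `i ∉ S` and `supp c_i` is covered
by the defective columns, then `w = #supp c_i ≤ ∑_{j ∈ S} #(supp c_i ∩ supp c_j)`. This is a sum
of independent overlaps, each at most `w - d/2` by the minimum distance, with mean at most
`μ = t (w - D/2)` by the average distance. Bennett's inequality, weakened to Bernstein's form,
bounds the probability of this event by `exp (-3 (w - μ)² / (2 (w - d/2) (2μ + w))) ≤ ε / N`, and a
union bound over `i` gives `ε`.

Probabilities are sums over subsets `S ⊆ T` of the weights `p ^ #S * (1 - p) ^ (#T - #S)`.
-/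

open Real Finset

lemma le_of_hasDerivAt_nonneg_Ici {f f' : ℝ → ℝ} {a x : ℝ}
    (hf : ∀ y, a ≤ y → HasDerivAt f (f' y) y) (hf' : ∀ y, a < y → 0 ≤ f' y) (hx : a ≤ x) :
    f a ≤ f x :=
  monotoneOn_of_hasDerivWithinAt_nonneg (convex_Ici a)
    (fun y hy ↦ (hf y hy).continuousAt.continuousWithinAt)
    (fun y hy ↦ (hf y (interior_subset hy)).hasDerivWithinAt)
    (fun y hy ↦ hf' y (by simpa using hy)) Set.self_mem_Ici hx hx

lemma two_mul_sub_one_le_add_one_mul_log {x : ℝ} (hx : 1 ≤ x) :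
    2 * (x - 1) ≤ (x + 1) * log x := by
  have key := le_of_hasDerivAt_nonneg_Ici (f := fun y ↦ (y + 1) * log y - 2 * (y - 1))
    (f' := fun y ↦ log y + y⁻¹ - 1) ?_ ?_ hx
  · simpa using key
  · intro y hy
    refine (((hasDerivAt_id' y).add_const 1).mul (hasDerivAt_log (by linarith)) |>.sub
      (((hasDerivAt_id' y).sub_const 1).const_mul 2)).congr_deriv ?_
    field_simp
    ring
  · intro y hy
    linarith [one_sub_inv_le_log_of_pos (by linarith : 0 < y)]

/-- Bernstein's bound `h u ≥ 3 u² / (6 + 2 u)` on Bennett's function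
`h u = (1 + u) log (1 + u) - u`, written at `u = x - 1`. -/
lemma bernstein_le_bennett {x : ℝ} (hx : 1 ≤ x) :
    3 * (x - 1) ^ 2 ≤ 2 * (x + 2) * (x * log x - x + 1) := by
  have key := le_of_hasDerivAt_nonneg_Ici
    (f := fun y ↦ 2 * (y + 2) * (y * log y - y + 1) - 3 * (y - 1) ^ 2)
    (f' := fun y ↦ 4 * ((y + 1) * log y - 2 * (y - 1))) ?_ ?_ hx
  · simpa using key
  · intro y hy
    refine ((((hasDerivAt_id' y).add_const 2).const_mul 2).mul
      ((hasDerivAt_mul_log (by linarith)).sub (hasDerivAt_id' y) |>.add_const 1) |>.sub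
      (((hasDerivAt_id' y).sub_const 1).pow 2 |>.const_mul 3)).congr_deriv ?_
    simp only [Pi.sub_apply]
    ring
  · intro y hy
    linarith [two_mul_sub_one_le_add_one_mul_log hy.le]

lemma exp_mul_sub_one_le_div_mul {s y b : ℝ} (hb : 0 < b) (hy0 : 0 ≤ y) (hyb : y ≤ b) :
    exp (s * y) - 1 ≤ y / b * (exp (s * b) - 1) := by
  have hθ1 : y / b ≤ 1 := (div_le_one hb).2 hyb
  have := convexOn_exp.2 (Set.mem_univ 0) (Set.mem_univ (s * b)) (sub_nonneg.2 hθ1)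
    (div_nonneg hy0 hb.le) (sub_add_cancel 1 (y / b))
  simp only [smul_eq_mul, mul_zero, zero_add, exp_zero] at this
  rw [show y / b * (s * b) = s * y by field_simp] at this
  linarith

lemma sum_powerset_pow_mul_pow_mul_prod {R ι : Type*} [CommSemiring R] [DecidableEq ι]
    (T : Finset ι) (p q : R) (f : ι → R) :
    ∑ S ∈ T.powerset, p ^ #S * q ^ (#T - #S) * ∏ j ∈ S, f j = ∏ j ∈ T, (p * f j + q) := by
  rw [prod_add]
  refine sum_congr rfl fun S hS ↦ ?_
  rw [prod_mul_distrib, prod_const, prod_const, card_sdiff_of_subset (mem_powerset.1 hS)]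
  ring

lemma sum_filter_exists_le_sum_sum {α β : Type*} [Fintype β] (s : Finset α) (P : β → α → Prop)
    [∀ b, DecidablePred (P b)] [DecidablePred fun a ↦ ∃ b, P b a] {f : α → ℝ}
    (hf : ∀ a, 0 ≤ f a) :
    ∑ a ∈ s with ∃ b, P b a, f a ≤ ∑ b, ∑ a ∈ s with P b a, f a := calc
  _ ≤ ∑ a ∈ s, ∑ b, if P b a then f a else 0 := by
    rw [sum_filter]
    gcongr with a
    split_ifs with h
    · obtain ⟨b, hb⟩ := h
      convert single_le_sum (f := fun b ↦ if P b a then f a else 0)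
        (fun b _ ↦ by split_ifs <;> simp [hf]) (mem_univ b)
      simp [hb]
    · exact sum_nonneg fun b _ ↦ by split_ifs <;> simp [hf]
  _ = _ := by rw [sum_comm]; simp only [sum_filter]

section Tail

variable {ι : Type*} [DecidableEq ι] {T : Finset ι} {a : ι → ℝ} {p : ℝ}

lemma sum_powerset_le_exp_chernoff (hp0 : 0 ≤ p) (hp1 : p ≤ 1) {s : ℝ} (hs : 0 ≤ s) (w : ℝ) :
    ∑ S ∈ T.powerset with w ≤ ∑ j ∈ S, a j, p ^ #S * (1 - p) ^ (#T - #S)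
      ≤ exp (-(s * w) + p * ∑ j ∈ T, (exp (s * a j) - 1)) := calc
  _ ≤ ∑ S ∈ T.powerset, p ^ #S * (1 - p) ^ (#T - #S) * exp (s * (∑ j ∈ S, a j - w)) := by
    rw [sum_filter]
    gcongr with S
    split_ifs with h
    · exact le_mul_of_one_le_right (by bound) (one_le_exp (mul_nonneg hs (by linarith)))
    · bound
  _ = exp (-(s * w)) * ∏ j ∈ T, (p * exp (s * a j) + (1 - p)) := by
    rw [← sum_powerset_pow_mul_pow_mul_prod, mul_sum]
    refine sum_congr rfl fun S _ ↦ ?_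
    rw [← exp_sum, ← mul_sum, mul_sub, exp_sub, exp_neg]
    ring
  _ ≤ exp (-(s * w)) * ∏ j ∈ T, exp (p * (exp (s * a j) - 1)) := by
    gcongr with j
    linarith [add_one_le_exp (p * (exp (s * a j) - 1))]
  _ = _ := by rw [← exp_sum, ← exp_add, mul_sum]

variable {b μ w : ℝ}

lemma sum_powerset_le_exp_bennett (hp0 : 0 ≤ p) (hp1 : p ≤ 1) (hb : 0 < b)
    (ha : ∀ j ∈ T, 0 ≤ a j ∧ a j ≤ b) (hμ : p * ∑ j ∈ T, a j ≤ μ) (hμ0 : 0 < μ) (hμw : μ ≤ w) :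
    ∑ S ∈ T.powerset with w ≤ ∑ j ∈ S, a j, p ^ #S * (1 - p) ^ (#T - #S)
      ≤ exp (-((w * log (w / μ) - w + μ) / b)) := by
  set s := log (w / μ) / b
  have hwμ : 1 ≤ w / μ := (one_le_div hμ0).2 hμw
  have hsb : exp (s * b) = w / μ := by rw [div_mul_cancel₀ _ hb.ne', exp_log (by linarith)]
  refine (sum_powerset_le_exp_chernoff hp0 hp1 (div_nonneg (log_nonneg hwμ) hb.le) w).trans
    (exp_le_exp.2 ?_)
  have hmgf : p * ∑ j ∈ T, (exp (s * a j) - 1) ≤ μ * ((exp (s * b) - 1) / b) := calc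
    _ ≤ p * ∑ j ∈ T, a j / b * (exp (s * b) - 1) := by
      gcongr with j hj
      exact exp_mul_sub_one_le_div_mul hb (ha j hj).1 (ha j hj).2
    _ = (p * ∑ j ∈ T, a j) * ((exp (s * b) - 1) / b) := by
      rw [mul_assoc, sum_mul]
      congr 1
      exact sum_congr rfl fun j _ ↦ by ring
    _ ≤ μ * ((exp (s * b) - 1) / b) := by
      gcongr
      rw [hsb]
      exact div_nonneg (by linarith) hb.le
  have : -(s * w) + μ * ((w / μ - 1) / b) = -((w * log (w / μ) - w + μ) / b) := by
    simp only [s]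
    field_simp
    ring
  rw [hsb] at hmgf
  linarith

lemma sum_powerset_le_exp_bernstein (hp0 : 0 ≤ p) (hp1 : p ≤ 1)
    (ha : ∀ j ∈ T, 0 ≤ a j ∧ a j ≤ b) (hμ : p * ∑ j ∈ T, a j ≤ μ) (hμ0 : 0 < μ) (hμw : μ ≤ w)
    {L : ℝ} (hL : 0 < L) (hb : b ≤ 3 * (w - μ) ^ 2 / (2 * (2 * μ + w) * L)) :
    ∑ S ∈ T.powerset with w ≤ ∑ j ∈ S, a j, p ^ #S * (1 - p) ^ (#T - #S) ≤ exp (-L) := by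
  rcases le_or_gt b 0 with hb0 | hb0
  · rw [filter_eq_empty_iff.2 fun S hS hwS ↦ ?_, sum_empty]
    · positivity
    have : ∑ j ∈ S, a j ≤ 0 := sum_nonpos fun j hj ↦ (ha j (mem_powerset.1 hS hj)).2.trans hb0
    linarith
  refine (sum_powerset_le_exp_bennett hp0 hp1 hb0 ha hμ hμ0 hμw).trans (exp_le_exp.2 ?_)
  have hx := bernstein_le_bennett ((one_le_div hμ0).2 hμw)
  have hbL : b * (2 * (2 * μ + w) * L) ≤ 3 * (w - μ) ^ 2 := (le_div_iff₀ (by nlinarith)).1 hb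
  have hE : 3 * (w - μ) ^ 2 ≤ 2 * (2 * μ + w) * (w * log (w / μ) - w + μ) := by
    have hμ : μ ≠ 0 := hμ0.ne'
    have e₁ : μ ^ 2 * (3 * (w / μ - 1) ^ 2) = 3 * (w - μ) ^ 2 := by
      field_simp
    have e₂ : μ ^ 2 * (2 * (w / μ + 2) * (w / μ * log (w / μ) - w / μ + 1)) =
        2 * (2 * μ + w) * (w * log (w / μ) - w + μ) := by
      field_simp
      ring
    linarith [mul_le_mul_of_nonneg_left hx (sq_nonneg μ)]
  rw [neg_le_neg_iff, le_div_iff₀ hb0]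
  exact le_of_mul_le_mul_left (a := 2 * (2 * μ + w)) (by linarith) (by linarith)

end Tail

lemma card_le_sum_card_inter_of_subset_biUnion {ι κ : Type*} [DecidableEq κ] {A : Finset κ}
    {S : Finset ι} {B : ι → Finset κ} (h : A ⊆ S.biUnion B) : #A ≤ ∑ j ∈ S, #(A ∩ B j) := calc
  #A = #(S.biUnion fun j ↦ A ∩ B j) := by rw [← inter_biUnion, inter_eq_left.2 h]
  _ ≤ _ := card_biUnion_le

section Code

variable {ι κ : Type*} [Fintype κ] [DecidableEq κ]

def supp (x : κ → Bool) : Finset κ := {j | x j = true}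

lemma hammingDist_add_two_mul_card_inter_supp (x y : κ → Bool) :
    hammingDist x y + 2 * #(supp x ∩ supp y) = #(supp x) + #(supp y) := by
  simp only [hammingDist, supp, ← filter_and, card_filter, mul_sum, ← sum_add_distrib]
  refine sum_congr rfl fun j _ ↦ ?_
  cases x j <;> cases y j <;> rfl

lemma hammingDist_eq_of_card_supp {x y : κ → Bool} {w : ℕ} (hx : #(supp x) = w)
    (hy : #(supp y) = w) : (hammingDist x y : ℝ) = 2 * w - 2 * #(supp x ∩ supp y) := by
  have := hammingDist_add_two_mul_card_inter_supp x y
  rw [hx, hy] at this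
  have : (hammingDist x y : ℝ) + 2 * #(supp x ∩ supp y) = w + w := by exact_mod_cast this
  linarith

variable [Fintype ι]

lemma sum_card_inter_supp_eq (c : ι → κ → Bool) {w : ℕ} (hw : ∀ j, #(supp (c j)) = w) (i : ι) :
    ∑ j, (#(supp (c i) ∩ supp (c j)) : ℝ) =
      Fintype.card ι * w - (∑ j, (hammingDist (c i) (c j) : ℝ)) / 2 := by
  simp only [hammingDist_eq_of_card_supp (hw i) (hw _), sum_sub_distrib, sum_const, card_univ,
    nsmul_eq_mul, ← mul_sum]
  ring

variable [DecidableEq ι]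

lemma sum_covered_le_exp (c : ι → κ → Bool) (i : ι) {w d : ℕ} {p μ L : ℝ}
    (hw : ∀ j, #(supp (c j)) = w) (hd : ∀ j, j ≠ i → d ≤ hammingDist (c i) (c j))
    (hp0 : 0 < p) (hp1 : p ≤ 1) (hμ : p * ∑ j, (#(supp (c i) ∩ supp (c j)) : ℝ) ≤ μ)
    (hμw : μ < w) (hL : 0 < L) (hb : (w : ℝ) - d / 2 ≤ 3 * (w - μ) ^ 2 / (2 * (2 * μ + w) * L)) :
    ∑ S ∈ univ with i ∉ S ∧ supp (c i) ⊆ S.biUnion fun k ↦ supp (c k),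
      p ^ #S * (1 - p) ^ (Fintype.card ι - #S) ≤ exp (-L) := by
  set a : ι → ℝ := fun j ↦ #(supp (c i) ∩ supp (c j))
  have ha : ∀ j ∈ univ.erase i, 0 ≤ a j ∧ a j ≤ w - d / 2 := by
    intro j hj
    have hdj : (d : ℝ) ≤ hammingDist (c i) (c j) := by exact_mod_cast hd j (ne_of_mem_erase hj)
    rw [hammingDist_eq_of_card_supp (hw i) (hw j)] at hdj
    exact ⟨by positivity, by linarith⟩
  have hpw : p * w ≤ μ := by
    refine le_trans (mul_le_mul_of_nonneg_left ?_ hp0.le) hμ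
    simpa [a, hw] using single_le_sum (fun j _ ↦ by positivity : ∀ j ∈ univ, 0 ≤ a j) (mem_univ i)
  have hμT : p * ∑ j ∈ univ.erase i, a j ≤ μ := by
    refine le_trans (mul_le_mul_of_nonneg_left ?_ hp0.le) hμ
    exact sum_le_sum_of_subset_of_nonneg (subset_univ _) fun _ _ _ ↦ by positivity
  have hμ0 : 0 < μ := by nlinarith
  refine le_trans ?_ (sum_powerset_le_exp_bernstein hp0.le hp1 ha hμT hμ0 hμw.le hL hb)
  calc _ ≤ ∑ S ∈ univ with i ∉ S ∧ supp (c i) ⊆ S.biUnion fun k ↦ supp (c k),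
        p ^ #S * (1 - p) ^ (#(univ.erase i) - #S) := by
        refine sum_le_sum fun S _ ↦ mul_le_mul_of_nonneg_left ?_ (by positivity)
        refine pow_le_pow_of_le_one (by linarith) (by linarith) ?_
        rw [card_erase_of_mem (mem_univ i), card_univ]
        omega
    _ ≤ _ := by
      refine sum_le_sum_of_subset_of_nonneg (fun S hS ↦ ?_) fun _ _ _ ↦ by bound
      obtain ⟨hiS, hcov⟩ := (mem_filter.1 hS).2
      refine mem_filter.2 ⟨mem_powerset.2 (subset_erase.2 ⟨subset_univ S, hiS⟩), ?_⟩
      have := card_le_sum_card_inter_of_subset_biUnion hcov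
      rw [hw] at this
      simp only [a]
      exact_mod_cast this

end Code

theorem model1_recovery_general (M N d w t : ℕ) (D ε : ℝ) (c : Fin N → Fin M → Bool)
    (hN : 0 < N)
    (hw : ∀ i, (Finset.univ.filter (fun j => c i j = true)).card = w)
    (hd : ∀ i j, i ≠ j → d ≤ hammingDist (c i) (c j))
    (hD : D = (1 / (N : ℝ)) *
      Finset.univ.inf' (Finset.univ_nonempty_iff.mpr ⟨⟨0, hN⟩⟩)
        (fun i => ∑ j, (hammingDist (c i) (c j) : ℝ)))
    (ht1 : 1 ≤ t) (ht2 : t ≤ N)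
    (hpos : 0 < (w : ℝ) - (t : ℝ) * ((w : ℝ) - D / 2))
    (hε0 : 0 < ε) (hε1 : ε < 1)
    (hcond : (w : ℝ) - (d : ℝ) / 2 ≤
      3 * ((w : ℝ) - (t : ℝ) * ((w : ℝ) - D / 2)) ^ 2 /
        (2 * (2 * (t : ℝ) * ((w : ℝ) - D / 2) + (w : ℝ)) * Real.log ((N : ℝ) / ε))) :
    ∑ S ∈ Finset.univ.filter (fun S : Finset (Fin N) =>
        ∃ i ∉ S, Finset.univ.filter (fun j => c i j = true) ⊆
          S.biUnion fun k => Finset.univ.filter (fun j => c k j = true)),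
      ((t : ℝ) / (N : ℝ)) ^ S.card * (1 - (t : ℝ) / (N : ℝ)) ^ (N - S.card) ≤ ε := by
  have hN0 : (0 : ℝ) < N := by exact_mod_cast hN
  have hp0 : 0 < (t : ℝ) / N := div_pos (by exact_mod_cast ht1) hN0
  have hp1 : (t : ℝ) / N ≤ 1 := (div_le_one hN0).2 (by exact_mod_cast ht2)
  have hL : 0 < log (N / ε) :=
    log_pos ((one_lt_div hε0).2 (hε1.trans_le (by exact_mod_cast hN)))
  have hsupp : ∀ i, #(supp (c i)) = w := hw
  have hrow (i : Fin N) :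
      (t : ℝ) / N * ∑ j, (#(supp (c i) ∩ supp (c j)) : ℝ) ≤ t * (w - D / 2) := by
    have hND : (N : ℝ) * D ≤ ∑ j, (hammingDist (c i) (c j) : ℝ) := by
      rw [hD, ← mul_assoc, mul_one_div_cancel hN0.ne', one_mul]
      exact inf'_le _ (mem_univ i)
    rw [sum_card_inter_supp_eq c hsupp i, Fintype.card_fin, div_mul_eq_mul_div, div_le_iff₀ hN0]
    nlinarith
  calc _ ≤ ∑ i, ∑ S ∈ univ with i ∉ S ∧ supp (c i) ⊆ S.biUnion fun k ↦ supp (c k),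
        ((t : ℝ) / N) ^ #S * (1 - (t : ℝ) / N) ^ (N - #S) :=
        sum_filter_exists_le_sum_sum _ _ fun S ↦ by positivity
    _ ≤ ∑ _i : Fin N, exp (-log (N / ε)) := sum_le_sum fun i _ ↦ by
        simpa using sum_covered_le_exp c i hsupp (fun j hj ↦ hd i j hj.symm) hp0 hp1 (hrow i)
          (by linarith) hL (by convert hcond using 4; ring)
    _ = ε := by
      rw [sum_const, card_univ, Fintype.card_fin, exp_neg, exp_log (by positivity), nsmul_eq_mul,
        inv_div]
      field_simp

/-- Theorem for Model 1: for a constant-weight code with minimum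
distance `d` and average distance `D` satisfying
`w − d/2 ≤ 3(w − t(w − D/2))² / (2(2t(w − D/2) + w)·ln(N/ε))`, if every item is
independently defective with probability `t/N`, then the probability that some
non-defective column has its support covered by the defective columns is at most `ε`. -/
theorem model1_recovery (M N d w t : ℕ) (D ε : ℝ) (c : Fin N → Fin M → Bool)
    (hN : 0 < N)
    (hinj : Function.Injective c)
    (hw : ∀ i, (Finset.univ.filter (fun j => c i j = true)).card = w)
    (hd : ∀ i j, i ≠ j → d ≤ hammingDist (c i) (c j))
    (hD : D = (1 / (N : ℝ)) *
      Finset.univ.inf' (Finset.univ_nonempty_iff.mpr ⟨⟨0, hN⟩⟩)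
        (fun i => ∑ j, (hammingDist (c i) (c j) : ℝ)))
    (ht1 : 1 ≤ t) (ht2 : t ≤ N)
    (hpos : 0 < (w : ℝ) - (t : ℝ) * ((w : ℝ) - D / 2))
    (hε0 : 0 < ε) (hε1 : ε < 1)
    (hcond : (w : ℝ) - (d : ℝ) / 2 ≤
      3 * ((w : ℝ) - (t : ℝ) * ((w : ℝ) - D / 2)) ^ 2 /
        (2 * (2 * (t : ℝ) * ((w : ℝ) - D / 2) + (w : ℝ)) * Real.log ((N : ℝ) / ε))) :
    ∑ S ∈ Finset.univ.filter (fun S : Finset (Fin N) =>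
        ∃ i ∉ S, Finset.univ.filter (fun j => c i j = true) ⊆
          S.biUnion fun k => Finset.univ.filter (fun j => c k j = true)),
      ((t : ℝ) / (N : ℝ)) ^ S.card * (1 - (t : ℝ) / (N : ℝ)) ^ (N - S.card) ≤ ε :=
  model1_recovery_general M N d w t D ε c hN hw hd hD ht1 ht2 hpos hε0 hε1 hcond
end

section
/- Let C be an (M,N,d,w) constant-weight binary code with average distance D, let t be a positive integer with t ≤ N−1, and assume d < D and w − t(w − D/2) > 0. Then the number of pairs (c, S), where c ∈ C and S is a t-element subset of C\{c}, satisfying ∑_{x∈S} (w − d_H(c,x)/2) ≥ w, is at most N·C(N−1,t)·exp(−3(w − t(w − D/2))² / ((2t(w − D/2) + w)·(D − d))). -/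
/-!
Fix a codeword `c` and put `a x = w - d_H(c, x) / 2` for the other codewords `x`. These numbers
lie in `[0, μ + γ]` with `μ = w - D/2` and `γ = (D - d)/2`, and their mean is at most `μ`, because
every row sum of distances is at least `N D`. The `t`-subsets `S` with `∑_{x ∈ S} a x ≥ w` are
counted by a Chernoff bound: by Maclaurin's inequality, `∑_S ∏_{x ∈ S} exp (l a x)` is at most
`C(N-1, t)` times the `t`-th power of the mean of `exp (l a x)`; convexity of `exp` and a
Bennett-type estimate bound that mean by `exp (l μ + μ/γ (exp (l γ) - l γ - 1))`, and Bernstein's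
bound `exp v - v - 1 ≤ 3 v² / (2 (3 - v))` at the optimal `l` yields the exponent. Summing over
the `N` codewords gives the factor `N`.
-/

open Finset Real

lemma le_of_hasDerivAt_nonneg {f f' : ℝ → ℝ} {a b x : ℝ}
    (hf : ∀ y ∈ Set.Ico a b, HasDerivAt f (f' y) y) (hf' : ∀ y ∈ Set.Ioo a b, 0 ≤ f' y)
    (hx : x ∈ Set.Ico a b) : f a ≤ f x := by
  refine monotoneOn_of_hasDerivWithinAt_nonneg (f' := f') (convex_Ico a b) (fun y hy ↦ ?_) ?_ ?_
    (Set.left_mem_Ico.2 (hx.1.trans_lt hx.2)) hx hx.1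
  · exact (hf y hy).continuousAt.continuousWithinAt
  · rw [interior_Ico]
    exact fun y hy ↦ (hf y (Set.Ioo_subset_Ico_self hy)).hasDerivWithinAt
  · rwa [interior_Ico]

lemma exp_le_div_three_sub_pow_three {v : ℝ} (hv : v < 3) : exp v ≤ 27 / (3 - v) ^ 3 := by
  have hcube : ((3 - v) / 3) ^ 3 ≤ exp (-v) := by
    calc ((3 - v) / 3) ^ 3 ≤ exp (-v / 3) ^ 3 := by
          gcongr
          linarith [add_one_le_exp (-v / 3)]
      _ = exp (-v) := by rw [← exp_nat_mul]; ring_nf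
  rw [le_div_iff₀ (pow_pos (by linarith) 3)]
  have := mul_le_mul_of_nonneg_left hcube (exp_pos v).le
  rw [← exp_add, add_neg_cancel, exp_zero] at this
  linarith

lemma exp_sub_sub_one_le {v : ℝ} (h0 : 0 ≤ v) (h3 : v < 3) :
    exp v - v - 1 ≤ 3 * v ^ 2 / (2 * (3 - v)) := by
  -- The difference of the two sides and its derivative vanish at `0`, and its second derivative
  -- is `27 / (3 - y) ^ 3 - exp y ≥ 0`.
  have hG' : ∀ y ∈ Set.Ico 0 3,
      HasDerivAt (fun y ↦ 3 * y * (6 - y) / (2 * (3 - y) ^ 2) - (exp y - 1))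
      (27 / (3 - y) ^ 3 - exp y) y := by
    intro y hy
    have : 3 - y ≠ 0 := by linarith [hy.2]
    refine ((((hasDerivAt_id' y).const_mul 3).fun_mul ((hasDerivAt_id' y).const_sub 6)).fun_div
      (((hasDerivAt_id' y).const_sub 3).fun_pow 2 |>.const_mul 2) (by positivity)).sub
      ((hasDerivAt_exp y).sub_const 1) |>.congr_deriv ?_
    field_simp
    ring
  have hG : ∀ y ∈ Set.Ico 0 3, HasDerivAt (fun y ↦ 3 * y ^ 2 / (2 * (3 - y)) - (exp y - y - 1))
      (3 * y * (6 - y) / (2 * (3 - y) ^ 2) - (exp y - 1)) y := by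
    intro y hy
    have : 3 - y ≠ 0 := by linarith [hy.2]
    refine ((((hasDerivAt_id' y).fun_pow 2).const_mul 3).fun_div
      (((hasDerivAt_id' y).const_sub 3).const_mul 2) (by positivity)).sub
      (((hasDerivAt_exp y).sub (hasDerivAt_id' y)).sub_const 1) |>.congr_deriv ?_
    field_simp
    ring
  have hG'_nonneg := fun y (hy : y ∈ Set.Ioo (0 : ℝ) 3) ↦ le_of_hasDerivAt_nonneg hG'
    (fun z hz ↦ sub_nonneg.2 (exp_le_div_three_sub_pow_three hz.2)) (Set.Ioo_subset_Ico_self hy)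
  have := le_of_hasDerivAt_nonneg hG (fun y hy ↦ by simpa using hG'_nonneg y hy) ⟨h0, h3⟩
  simp only [ne_eq, OfNat.ofNat_ne_zero, not_false_eq_true, zero_pow, mul_zero, sub_zero,
    zero_div, exp_zero, sub_self, sub_nonneg, tsub_le_iff_right] at this
  linarith

lemma one_add_mul_exp_sub_one_div_le_exp {μ γ l : ℝ} (hμ : 0 ≤ μ) (hγ : 0 < γ) (hl : 0 ≤ l) :
    1 + μ * (exp (l * (μ + γ)) - 1) / (μ + γ)
      ≤ exp (l * μ + μ / γ * (exp (l * γ) - l * γ - 1)) := by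
  set g : ℝ → ℝ := fun x ↦ x * μ + μ / γ * (exp (x * γ) - x * γ - 1)
  have hg : ∀ x, HasDerivAt g (μ * exp (x * γ)) x := by
    intro x
    refine ((hasDerivAt_mul_const μ).add ((((hasDerivAt_mul_const γ).exp).sub
      (hasDerivAt_mul_const γ)).sub_const 1 |>.const_mul (μ / γ))).congr_deriv ?_
    field_simp
    ring
  have hF : ∀ x ∈ Set.Ico 0 (l + 1),
      HasDerivAt (fun x ↦ exp (g x) - μ * (exp (x * (μ + γ)) - 1) / (μ + γ))
      (μ * exp (x * γ) * (exp (g x) - exp (x * μ))) x := by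
    intro x _
    refine ((hg x).exp.sub ((((hasDerivAt_mul_const (μ + γ)).exp).sub_const 1).const_mul μ
      |>.div_const (μ + γ))).congr_deriv ?_
    rw [mul_div_assoc, mul_div_cancel_right₀ _ (by positivity),
      show x * (μ + γ) = x * γ + x * μ by ring, exp_add (x * γ)]
    ring
  have hgx : ∀ x, 0 ≤ x → x * μ ≤ g x := fun x hx ↦ by
    have := add_one_le_exp (x * γ)
    have : 0 ≤ μ / γ * (exp (x * γ) - x * γ - 1) := mul_nonneg (by positivity) (by linarith)
    simp only [g]
    linarith
  have := le_of_hasDerivAt_nonneg hF (fun x hx ↦ mul_nonneg (by positivity)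
    (sub_nonneg.2 (exp_le_exp.2 (hgx x hx.1.le)))) ⟨hl, by linarith⟩
  simp only [g, zero_mul, exp_zero, sub_zero, sub_self, mul_zero, add_zero, zero_div] at this
  linarith

lemma exp_mul_le_one_add_mul_div {z b l : ℝ} (hz : 0 ≤ z) (hzb : z ≤ b) (hb : 0 < b) :
    exp (l * z) ≤ 1 + z * (exp (l * b) - 1) / b := by
  have key := convexOn_exp.2 (Set.mem_univ 0) (Set.mem_univ (l * b))
    (sub_nonneg.2 ((div_le_one hb).2 hzb)) (div_nonneg hz hb.le) (sub_add_cancel 1 (z / b))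
  simp only [smul_eq_mul, mul_zero, zero_add, exp_zero, mul_one] at key
  calc exp (l * z) = exp (z / b * (l * b)) := by field_simp
    _ ≤ 1 - z / b + z / b * exp (l * b) := key
    _ = 1 + z * (exp (l * b) - 1) / b := by field_simp; ring

lemma sum_exp_mul_le {α : Type*} {T : Finset α} {a : α → ℝ} {μ γ l : ℝ}
    (hμ : 0 ≤ μ) (hγ : 0 < γ) (hl : 0 ≤ l)
    (ha : ∀ x ∈ T, 0 ≤ a x ∧ a x ≤ μ + γ) (hsum : ∑ x ∈ T, a x ≤ #T * μ) :
    ∑ x ∈ T, exp (l * a x) ≤ #T * exp (l * μ + μ / γ * (exp (l * γ) - l * γ - 1)) := by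
  set E := (exp (l * (μ + γ)) - 1) / (μ + γ)
  have hE : 0 ≤ E := div_nonneg (sub_nonneg.2 (one_le_exp (by positivity))) (by positivity)
  calc ∑ x ∈ T, exp (l * a x) ≤ ∑ x ∈ T, (1 + a x * E) := sum_le_sum fun x hx ↦ by
        simpa only [mul_div_assoc] using exp_mul_le_one_add_mul_div (ha x hx).1 (ha x hx).2
          (by positivity)
    _ = #T + (∑ x ∈ T, a x) * E := by rw [sum_add_distrib, sum_mul]; simp
    _ ≤ #T + #T * μ * E := by gcongr
    _ = #T * (1 + μ * (exp (l * (μ + γ)) - 1) / (μ + γ)) := by ring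
    _ ≤ _ := by gcongr; exact one_add_mul_exp_sub_one_div_le_exp hμ hγ hl

lemma add_one_mul_mul_pow_le {p q : ℝ} (hp : 0 ≤ p) (hq : 0 ≤ q) (n : ℕ) :
    (n + 1) * p * q ^ n ≤ p ^ (n + 1) + n * q ^ (n + 1) := by
  rcases hq.eq_or_lt with rfl | hq
  · rcases n.eq_zero_or_pos with rfl | hn
    · simp
    · simp [zero_pow hn.ne', pow_nonneg hp]
  · have key := one_add_mul_le_pow (a := p / q - 1) (by linarith [div_nonneg hp hq.le]) (n + 1)
    rw [add_sub_cancel, div_pow, le_div_iff₀ (pow_pos hq _)] at key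
    have : (1 + ↑(n + 1) * (p / q - 1)) * q ^ (n + 1) = q ^ n * q + (n + 1) * (p - q) * q ^ n := by
      rw [pow_succ]; field_simp; push_cast; ring
    rw [this] at key
    rw [pow_succ q n]
    linarith

lemma choose_succ_mul_add_choose_mul (m n : ℕ) :
    m.choose (n + 1) * (n + 1) + m.choose n * n = m.choose n * m := by
  rcases le_or_gt n m with h | h
  · rw [Nat.choose_succ_right_eq, ← Nat.mul_add, Nat.sub_add_cancel h]
  · simp [Nat.choose_eq_zero_of_lt h, Nat.choose_eq_zero_of_lt (h.trans (Nat.lt_succ_self n))]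

lemma choose_mul_pow_add_le_succ_choose_mul_pow {m n : ℕ} {p q u : ℝ} (hp : 0 ≤ p) (hq : 0 ≤ q)
    (hrel : m * q + u = (m + 1) * p) :
    m.choose (n + 1) * q ^ (n + 1) + u * (m.choose n * q ^ n)
      ≤ (m + 1).choose (n + 1) * p ^ (n + 1) := by
  have hpascal : ((m + 1).choose (n + 1) : ℝ) * (n + 1) = (m + 1) * m.choose n := by
    exact_mod_cast (Nat.add_one_mul_choose_eq m n).symm
  have hid : (m.choose (n + 1) : ℝ) * (n + 1) + m.choose n * n = m.choose n * m := by
    exact_mod_cast choose_succ_mul_add_choose_mul m n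
  have hamgm := mul_le_mul_of_nonneg_left (add_one_mul_mul_pow_le hp hq n)
    (by positivity : (0 : ℝ) ≤ (m + 1) * m.choose n)
  rw [← mul_le_mul_iff_of_pos_right (by positivity : (0 : ℝ) < n + 1)]
  linear_combination hamgm + q ^ (n + 1) * hid + (n + 1) * m.choose n * q ^ n * hrel
    - p ^ (n + 1) * hpascal

lemma sum_powersetCard_succ_insert_prod {α R : Type*} [DecidableEq α] [CommSemiring R]
    {a : α} {T : Finset α} (ha : a ∉ T) (f : α → R) (n : ℕ) :
    ∑ S ∈ (insert a T).powersetCard (n + 1), ∏ x ∈ S, f x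
      = ∑ S ∈ T.powersetCard (n + 1), ∏ x ∈ S, f x
        + f a * ∑ S ∈ T.powersetCard n, ∏ x ∈ S, f x := by
  have hnot : ∀ S ∈ T.powersetCard n, a ∉ S := fun S hS h ↦ ha ((mem_powersetCard.1 hS).1 h)
  rw [powersetCard_succ_insert ha, sum_union, sum_image, mul_sum]
  · exact congrArg _ (sum_congr rfl fun S hS ↦ prod_insert (hnot S hS))
  · intro S hS S' hS' h
    rw [← erase_insert (hnot S hS), ← erase_insert (hnot S' hS'), h]
  · refine disjoint_left.2 fun S hS hS' ↦ ?_
    obtain ⟨S', -, rfl⟩ := mem_image.1 hS'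
    exact ha ((mem_powersetCard.1 hS).1 (mem_insert_self a S'))

theorem sum_powersetCard_prod_le_choose_mul_pow {α : Type*} [DecidableEq α] (T : Finset α)
    {f : α → ℝ} (hf : ∀ x ∈ T, 0 ≤ f x) (t : ℕ) :
    ∑ S ∈ T.powersetCard t, ∏ x ∈ S, f x ≤ (#T).choose t * ((∑ x ∈ T, f x) / #T) ^ t := by
  induction T using Finset.induction_on generalizing t with
  | empty =>
    cases t with
    | zero => simp
    | succ n => simp [powersetCard_eq_empty.2 (by simp : #(∅ : Finset α) < n + 1)]
  | insert a T ha ih =>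
    have hfT : ∀ x ∈ T, 0 ≤ f x := fun x hx ↦ hf x (mem_insert_of_mem hx)
    have hfa : 0 ≤ f a := hf a (mem_insert_self a T)
    cases t with
    | zero => simp
    | succ n =>
      rw [sum_powersetCard_succ_insert_prod ha, card_insert_of_notMem ha]
      have hq : 0 ≤ (∑ x ∈ T, f x) / #T := div_nonneg (sum_nonneg hfT) (Nat.cast_nonneg _)
      have hp : 0 ≤ (∑ x ∈ insert a T, f x) / (#T + 1 : ℕ) :=
        div_nonneg (sum_nonneg hf) (Nat.cast_nonneg _)
      have hrel : (#T : ℝ) * ((∑ x ∈ T, f x) / #T) + f a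
          = (#T + 1) * ((∑ x ∈ insert a T, f x) / (#T + 1 : ℕ)) := by
        rw [sum_insert ha]
        rcases (#T).eq_zero_or_pos with h | h
        · simp [card_eq_zero.1 h]
        · push_cast; field_simp; ring
      calc _ ≤ (#T).choose (n + 1) * ((∑ x ∈ T, f x) / #T) ^ (n + 1)
            + f a * ((#T).choose n * ((∑ x ∈ T, f x) / #T) ^ n) := by
            gcongr
            exacts [ih hfT _, ih hfT _]
        _ ≤ _ := choose_mul_pow_add_le_succ_choose_mul_pow hp hq hrel

lemma card_filter_le_sum_exp {β : Type*} (s : Finset β) (g : β → ℝ) {w l : ℝ} (hl : 0 ≤ l) :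
    (#{S ∈ s | w ≤ g S} : ℝ) ≤ ∑ S ∈ s, exp (l * (g S - w)) := by
  calc (#{S ∈ s | w ≤ g S} : ℝ) = ∑ S ∈ s with w ≤ g S, 1 := by simp
    _ ≤ ∑ S ∈ s with w ≤ g S, exp (l * (g S - w)) := sum_le_sum fun S hS ↦
        one_le_exp (mul_nonneg hl (sub_nonneg.2 (mem_filter.1 hS).2))
    _ ≤ ∑ S ∈ s, exp (l * (g S - w)) :=
        sum_le_sum_of_subset_of_nonneg (filter_subset _ _) fun _ _ _ ↦ (exp_pos _).le

section Chernoff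

variable {α : Type*} [DecidableEq α] {T : Finset α} {a : α → ℝ} {t : ℕ} {w μ γ : ℝ}

lemma card_filter_powersetCard_le_choose_mul_exp {l : ℝ} (hμ : 0 ≤ μ) (hγ : 0 < γ) (hl : 0 ≤ l)
    (ha : ∀ x ∈ T, 0 ≤ a x ∧ a x ≤ μ + γ) (hsum : ∑ x ∈ T, a x ≤ #T * μ) :
    (#{S ∈ T.powersetCard t | w ≤ ∑ x ∈ S, a x} : ℝ)
      ≤ (#T).choose t * exp (-(l * w) + t * (l * μ + μ / γ * (exp (l * γ) - l * γ - 1))) := by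
  set K := exp (l * μ + μ / γ * (exp (l * γ) - l * γ - 1))
  have hmean : (∑ x ∈ T, exp (l * a x)) / #T ≤ K :=
    div_le_of_le_mul₀ (Nat.cast_nonneg _) (exp_pos _).le (by
      rw [mul_comm]; exact sum_exp_mul_le hμ hγ hl ha hsum)
  calc (#{S ∈ T.powersetCard t | w ≤ ∑ x ∈ S, a x} : ℝ)
      ≤ ∑ S ∈ T.powersetCard t, exp (l * (∑ x ∈ S, a x - w)) := card_filter_le_sum_exp _ _ hl
    _ = exp (-(l * w)) * ∑ S ∈ T.powersetCard t, ∏ x ∈ S, exp (l * a x) := by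
        rw [mul_sum]
        refine sum_congr rfl fun S _ ↦ ?_
        rw [← exp_sum, ← exp_add, mul_sub, mul_sum, neg_add_eq_sub]
    _ ≤ exp (-(l * w)) * ((#T).choose t * ((∑ x ∈ T, exp (l * a x)) / #T) ^ t) := by
        gcongr
        exact sum_powersetCard_prod_le_choose_mul_pow T (fun x _ ↦ (exp_pos _).le) t
    _ ≤ exp (-(l * w)) * ((#T).choose t * K ^ t) := by
        gcongr
    _ = _ := by rw [← exp_nat_mul, mul_left_comm, ← exp_add]

theorem card_filter_powersetCard_le_choose_mul_exp_sq (hμ : 0 < μ) (hγ : 0 < γ)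
    (ha : ∀ x ∈ T, 0 ≤ a x ∧ a x ≤ μ + γ) (hsum : ∑ x ∈ T, a x ≤ #T * μ)
    (ht : 1 ≤ t) (hΔ : 0 < w - t * μ) :
    (#{S ∈ T.powersetCard t | w ≤ ∑ x ∈ S, a x} : ℝ)
      ≤ (#T).choose t * exp (-(3 * (w - t * μ) ^ 2 / ((2 * t * μ + w) * (2 * γ)))) := by
  set Δ := w - t * μ
  set A := (t : ℝ) * μ
  have hA : 0 < A := mul_pos (by exact_mod_cast ht) hμ
  -- the Bernstein choice `l * γ = 3Δ / (3A + Δ)` of the exponential tilt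
  set v := 3 * Δ / (3 * A + Δ)
  have hv0 : 0 ≤ v := by positivity
  have hv3 : v < 3 := by rw [div_lt_iff₀ (by positivity)]; linarith
  refine (card_filter_powersetCard_le_choose_mul_exp hμ.le hγ (div_nonneg hv0 hγ.le) ha hsum).trans
    (mul_le_mul_of_nonneg_left (exp_le_exp.2 ?_) (Nat.cast_nonneg _))
  rw [div_mul_cancel₀ v hγ.ne']
  have hbern := mul_le_mul_of_nonneg_left (exp_sub_sub_one_le hv0 hv3)
    (div_nonneg hA.le hγ.le)
  have hw : w = Δ + A := by ring
  calc -(v / γ * w) + t * (v / γ * μ + μ / γ * (exp v - v - 1))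
      = -(v / γ * Δ) + A / γ * (exp v - v - 1) := by rw [hw]; ring
    _ ≤ -(v / γ * Δ) + A / γ * (3 * v ^ 2 / (2 * (3 - v))) := by linarith
    _ = _ := by
        have h3v : 3 - v = 9 * A / (3 * A + Δ) := by simp only [v]; field_simp; ring
        rw [h3v, hw]
        simp only [v]
        field_simp
        ring

end Chernoff

lemma hammingDist_le_card_add_card {ι : Type*} [Fintype ι] (u v : ι → Bool) :
    hammingDist u v ≤ #{j | u j = true} + #{j | v j = true} := by
  have h : ∀ u : ι → Bool, hammingDist u (fun _ ↦ false) = #{j | u j = true} := by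
    intro u
    simp [hammingDist]
  calc hammingDist u v ≤ hammingDist u (fun _ ↦ false) + hammingDist (fun _ ↦ false) v :=
        hammingDist_triangle _ _ _
    _ = _ := by rw [hammingDist_comm _ v, h, h]

lemma card_filter_pairs_le {ι : Type*} [Fintype ι] [DecidableEq ι] (P : ι → Finset ι → Prop)
    [∀ i S, Decidable (P i S)] {t : ℕ} {B : ℝ}
    (h : ∀ i, (#{S ∈ (univ.erase i).powersetCard t | P i S} : ℝ) ≤ B) :
    (#{p : ι × Finset ι | p.1 ∉ p.2 ∧ #p.2 = t ∧ P p.1 p.2} : ℝ) ≤ Fintype.card ι * B := by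
  have hsub : ({p : ι × Finset ι | p.1 ∉ p.2 ∧ #p.2 = t ∧ P p.1 p.2} : Finset _)
      ⊆ univ.biUnion fun i ↦ {S ∈ (univ.erase i).powersetCard t | P i S}.map
        (Function.Embedding.sectR i _) := by
    rintro ⟨i, S⟩ hp
    simp only [mem_filter, mem_univ, true_and] at hp
    simp [subset_erase, hp]
  calc (#{p : ι × Finset ι | p.1 ∉ p.2 ∧ #p.2 = t ∧ P p.1 p.2} : ℝ)
      ≤ ∑ i, (#{S ∈ (univ.erase i).powersetCard t | P i S} : ℝ) := by
        exact_mod_cast (card_le_card hsub).trans (card_biUnion_le.trans_eq (by simp))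
    _ ≤ Fintype.card ι * B := by simpa using sum_le_sum fun i (_ : i ∈ univ) ↦ h i

section ConstantWeightCode

variable {ι κ : Type*} [Fintype κ] {c : ι → κ → Bool} {w d : ℕ} {D : ℝ}

lemma hammingDist_le_two_mul (hw : ∀ i, #{j | c i j = true} = w) (i j : ι) :
    (hammingDist (c i) (c j) : ℝ) ≤ 2 * w := by
  have := hammingDist_le_card_add_card (c i) (c j)
  rw [hw, hw] at this
  exact_mod_cast this.trans_eq (two_mul w).symm

variable [Fintype ι] [DecidableEq ι]

lemma sum_erase_hammingDist (i : ι) :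
    ∑ j ∈ univ.erase i, (hammingDist (c i) (c j) : ℝ) = ∑ j, (hammingDist (c i) (c j) : ℝ) :=
  sum_erase _ (by simp)

lemma lt_two_mul_of_le_sum_hammingDist (hw : ∀ i, #{j | c i j = true} = w) (hD : 0 < D) (i : ι)
    (hrow : Fintype.card ι * D ≤ ∑ j, (hammingDist (c i) (c j) : ℝ)) : D < 2 * w := by
  have : Nonempty ι := ⟨i⟩
  have hle : ∑ j, (hammingDist (c i) (c j) : ℝ) ≤ (Fintype.card ι - 1) * (2 * w) := by
    rw [← sum_erase_hammingDist]
    refine (sum_le_sum fun j _ ↦ hammingDist_le_two_mul hw i j).trans_eq ?_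
    rw [sum_const, card_erase_of_mem (mem_univ i), nsmul_eq_mul, card_univ,
      Nat.cast_sub Fintype.card_pos, Nat.cast_one]
  have hcard : (1 : ℝ) ≤ Fintype.card ι := by exact_mod_cast Fintype.card_pos
  nlinarith

theorem card_bad_subsets_le {t : ℕ} (hw : ∀ i, #{j | c i j = true} = w)
    (hd : ∀ i j, i ≠ j → d ≤ hammingDist (c i) (c j))
    (hrow : ∀ i, Fintype.card ι * D ≤ ∑ j, (hammingDist (c i) (c j) : ℝ))
    (hdD : (d : ℝ) < D) (hμ : 0 < (w : ℝ) - D / 2) (ht : 1 ≤ t)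
    (hpos : 0 < (w : ℝ) - t * ((w : ℝ) - D / 2)) (i : ι) :
    (#{S ∈ (univ.erase i).powersetCard t |
        (w : ℝ) ≤ ∑ x ∈ S, ((w : ℝ) - (hammingDist (c i) (c x) : ℝ) / 2)} : ℝ)
      ≤ (Fintype.card ι - 1).choose t * exp (-(3 * ((w : ℝ) - t * ((w : ℝ) - D / 2)) ^ 2 /
          ((2 * t * ((w : ℝ) - D / 2) + w) * (D - d)))) := by
  have hcard : #(univ.erase i) = Fintype.card ι - 1 := card_erase_of_mem (mem_univ i)
  have ha : ∀ x ∈ univ.erase i, 0 ≤ (w : ℝ) - (hammingDist (c i) (c x) : ℝ) / 2 ∧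
      (w : ℝ) - (hammingDist (c i) (c x) : ℝ) / 2 ≤ (w - D / 2) + (D - d) / 2 := by
    intro x hx
    have hdx : (d : ℝ) ≤ hammingDist (c i) (c x) := by
      exact_mod_cast hd i x (ne_of_mem_erase hx).symm
    constructor <;> linarith [hammingDist_le_two_mul hw i x]
  have hsum : ∑ x ∈ univ.erase i, ((w : ℝ) - (hammingDist (c i) (c x) : ℝ) / 2)
      ≤ #(univ.erase i) * (w - D / 2) := by
    have hD : 0 ≤ D := (Nat.cast_nonneg d).trans hdD.le
    have hcardle : (#(univ.erase i) : ℝ) ≤ Fintype.card ι := by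
      exact_mod_cast card_le_univ _
    rw [sum_sub_distrib, ← sum_div, sum_erase_hammingDist, sum_const, nsmul_eq_mul]
    nlinarith [hrow i]
  have := card_filter_powersetCard_le_choose_mul_exp_sq hμ (by linarith) ha hsum ht hpos
  rwa [hcard, show 2 * ((D - d) / 2) = D - d by ring] at this

end ConstantWeightCode

theorem bad_pair_count_general (M N d w t : ℕ) (D : ℝ) (c : Fin N → Fin M → Bool)
    (hN : 0 < N)
    (hw : ∀ i, (Finset.univ.filter (fun j => c i j = true)).card = w)
    (hd : ∀ i j, i ≠ j → d ≤ hammingDist (c i) (c j))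
    (hD : D = (1 / (N : ℝ)) *
      Finset.univ.inf' (Finset.univ_nonempty_iff.mpr ⟨⟨0, hN⟩⟩)
        (fun i => ∑ j, (hammingDist (c i) (c j) : ℝ)))
    (ht1 : 1 ≤ t)
    (hdD : (d : ℝ) < D)
    (hpos : 0 < (w : ℝ) - (t : ℝ) * ((w : ℝ) - D / 2)) :
    ((Finset.univ.filter (fun p : Fin N × Finset (Fin N) =>
        p.1 ∉ p.2 ∧ p.2.card = t ∧
        (w : ℝ) ≤ ∑ x ∈ p.2, ((w : ℝ) - (hammingDist (c p.1) (c x) : ℝ) / 2))).card : ℝ)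
      ≤ (N : ℝ) * ((N - 1).choose t : ℝ) *
        Real.exp (-(3 * ((w : ℝ) - (t : ℝ) * ((w : ℝ) - D / 2)) ^ 2 /
          ((2 * (t : ℝ) * ((w : ℝ) - D / 2) + (w : ℝ)) * (D - (d : ℝ))))) := by
  have hrow : ∀ i, Fintype.card (Fin N) * D ≤ ∑ j, (hammingDist (c i) (c j) : ℝ) := fun i ↦ by
    rw [hD, Fintype.card_fin, ← mul_assoc, mul_one_div_cancel (by positivity), one_mul]
    exact inf'_le _ (mem_univ i)
  have hμ : 0 < (w : ℝ) - D / 2 := by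
    linarith [lt_two_mul_of_le_sum_hammingDist hw ((Nat.cast_nonneg d).trans_lt hdD) ⟨0, hN⟩
      (hrow ⟨0, hN⟩)]
  have := card_filter_pairs_le _ (card_bad_subsets_le hw hd hrow hdD hμ ht1 hpos)
  rwa [Fintype.card_fin, ← mul_assoc] at this

/-- core large-deviation count in the proof of the Model 2 theorem: for a
constant-weight code with minimum distance `d` and average distance `D > d`, the number
of pairs `(c, S)` of a codeword `c` and a `t`-subset `S` of the remaining codewords with
`∑_{x∈S}(w − d_H(c,x)/2) ≥ w` is at most
`N·C(N−1,t)·exp(−3(w − t(w − D/2))²/((2t(w − D/2) + w)(D − d)))`. -/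
theorem bad_pair_count (M N d w t : ℕ) (D : ℝ) (c : Fin N → Fin M → Bool)
    (hN : 0 < N)
    (hinj : Function.Injective c)
    (hw : ∀ i, (Finset.univ.filter (fun j => c i j = true)).card = w)
    (hd : ∀ i j, i ≠ j → d ≤ hammingDist (c i) (c j))
    (hD : D = (1 / (N : ℝ)) *
      Finset.univ.inf' (Finset.univ_nonempty_iff.mpr ⟨⟨0, hN⟩⟩)
        (fun i => ∑ j, (hammingDist (c i) (c j) : ℝ)))
    (ht1 : 1 ≤ t) (ht2 : t < N)
    (hdD : (d : ℝ) < D)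
    (hpos : 0 < (w : ℝ) - (t : ℝ) * ((w : ℝ) - D / 2)) :
    ((Finset.univ.filter (fun p : Fin N × Finset (Fin N) =>
        p.1 ∉ p.2 ∧ p.2.card = t ∧
        (w : ℝ) ≤ ∑ x ∈ p.2, ((w : ℝ) - (hammingDist (c p.1) (c x) : ℝ) / 2))).card : ℝ)
      ≤ (N : ℝ) * ((N - 1).choose t : ℝ) *
        Real.exp (-(3 * ((w : ℝ) - (t : ℝ) * ((w : ℝ) - D / 2)) ^ 2 /
          ((2 * (t : ℝ) * ((w : ℝ) - D / 2) + (w : ℝ)) * (D - (d : ℝ))))) :=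
  bad_pair_count_general M N d w t D c hN hw hd hD ht1 hdD hpos
end

section
/- Let q ≥ 2 and m ≥ 1 be integers and let s be a real number with 1 < s < q. Then there exists a set C ⊆ {0,...,q−1}^m whose distinct elements have pairwise Hamming distance at least m(1 − 1/s) and with ln|C| ≥ m·(ln(q/s) − 1)/s. In particular, if ln(q/s) > 1 and |C| = N, then m ≤ s·ln N / (ln(q/s) − 1). -/
/-!
Gilbert–Varshamov argument. A maximal code `C` of minimum distance `n (1 - 1/s)` covers the
space: every word agrees with some codeword in at least `t = ⌈n/s⌉` coordinates. Hence the
cylinders `{y | y = x on S}` with `x ∈ C`, `#S = t` cover all `q ^ n` words, so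
`q ^ t ≤ #C * (n choose t) ≤ #C * (e n / t) ^ t ≤ #C * (e s) ^ t`, and taking logarithms
`log #C ≥ t (log (q/s) - 1) ≥ (n/s) (log (q/s) - 1)` whenever `log (q/s) ≥ 1`.
-/

open Finset Real

theorem Finset.exists_maximal_pairwise {β : Type*} [Fintype β] (r : β → β → Prop) [Std.Symm r] :
    ∃ C : Finset β, (C : Set β).Pairwise r ∧ ∀ y ∉ C, ∃ x ∈ C, ¬ r x y := by
  classical
  obtain ⟨C, hC⟩ := exists_maximal (s := {C : Finset β | (C : Set β).Pairwise r}) ⟨∅, by simp⟩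
  simp only [mem_filter, mem_univ, true_and] at hC
  refine ⟨C, hC.prop, fun y hy ↦ ?_⟩
  by_contra! hfar
  have hins : ((insert y C : Finset β) : Set β).Pairwise r := by
    rw [coe_insert, Set.pairwise_insert_of_symm_of_notMem hy]
    exact ⟨hC.prop, fun x hx ↦ Std.Symm.symm _ _ (hfar x hx)⟩
  exact hy (hC.eq_of_le hins (subset_insert y C) ▸ mem_insert_self y C)

theorem Nat.choose_le_exp_one_mul_div_pow (n k : ℕ) : (n.choose k : ℝ) ≤ (exp 1 * n / k) ^ k := by
  rcases k.eq_zero_or_pos with rfl | hk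
  · simp
  have hfac : (k : ℝ) ^ k / k.factorial ≤ exp 1 ^ k := by
    simpa [← exp_nat_mul] using pow_div_factorial_le_exp (k : ℝ) k.cast_nonneg k
  calc (n.choose k : ℝ) ≤ n ^ k / k.factorial := Nat.choose_le_pow_div k n
    _ = (n / k) ^ k * ((k : ℝ) ^ k / k.factorial) := by
      rw [div_pow, div_mul_div_cancel₀ (by positivity)]
    _ ≤ (n / k) ^ k * exp 1 ^ k := by gcongr
    _ = (exp 1 * n / k) ^ k := by ring

theorem mul_log_div_sub_one_le_log_of_pow_le_mul_choose {q N n t : ℕ} {s : ℝ} (hq : 0 < q)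
    (hs : 0 < s) (hn : n ≤ s * t) (h : q ^ t ≤ N * n.choose t) :
    t * (log (q / s) - 1) ≤ log N := by
  have hchoose : (n.choose t : ℝ) ≤ (exp 1 * s) ^ t := by
    refine (Nat.choose_le_exp_one_mul_div_pow n t).trans (pow_le_pow_left₀ (by positivity) ?_ t)
    rw [mul_div_assoc]
    exact mul_le_mul_of_nonneg_left (div_le_of_le_mul₀ t.cast_nonneg hs.le hn) (exp_pos 1).le
  have hpow : (q / (exp 1 * s)) ^ t ≤ (N : ℝ) := by
    rw [div_pow, div_le_iff₀ (by positivity)]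
    calc (q : ℝ) ^ t ≤ N * n.choose t := by exact_mod_cast h
      _ ≤ N * (exp 1 * s) ^ t := by gcongr
  calc (t : ℝ) * (log (q / s) - 1) = log ((q / (exp 1 * s)) ^ t) := by
        rw [log_pow, div_mul_eq_div_div_swap, log_div (by positivity) (exp_pos 1).ne', log_exp]
    _ ≤ log N := log_le_log (by positivity) hpow

section Hamming

variable {ι α : Type*} [Fintype ι] [DecidableEq α]

theorem card_filter_eq_add_hammingDist (x y : ι → α) :
    #{i | x i = y i} + hammingDist x y = Fintype.card ι :=
  card_filter_add_card_filter_not _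

variable [DecidableEq ι] [Fintype α]

theorem card_filter_forall_mem_eq_pow (x : ι → α) (S : Finset ι) :
    #{y : ι → α | ∀ i ∈ S, y i = x i} = Fintype.card α ^ (Fintype.card ι - #S) := by
  have hpi : ({y : ι → α | ∀ i ∈ S, y i = x i} : Finset _) =
      Fintype.piFinset fun i ↦ if i ∈ S then {x i} else univ := by
    ext y
    simp only [mem_filter, mem_univ, true_and, Fintype.mem_piFinset]
    refine forall_congr' fun i ↦ ?_
    split_ifs with hi <;> simp [hi]
  rw [hpi, Fintype.card_piFinset, ← card_compl, ← prod_const, ← prod_subset (subset_univ Sᶜ)]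
  · exact prod_congr rfl fun i hi ↦ by simp [mem_compl.mp hi]
  · intro i _ hi
    simp [not_not.mp (mem_compl.not.mp hi)]

theorem pow_card_le_card_mul_choose [Nonempty α] {C : Finset (ι → α)} {t : ℕ}
    (hC : ∀ y : ι → α, ∃ x ∈ C, t ≤ #{i | x i = y i}) :
    Fintype.card α ^ t ≤ #C * (Fintype.card ι).choose t := by
  set n := Fintype.card ι
  set q := Fintype.card α
  have htn : t ≤ n := by
    obtain ⟨x, -, hx⟩ := hC (Classical.arbitrary _)
    exact hx.trans (card_le_univ _)
  have hcover : (univ : Finset (ι → α)) ⊆ (C ×ˢ powersetCard t univ).biUnion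
      fun p ↦ ({y | ∀ i ∈ p.2, y i = p.1 i} : Finset (ι → α)) := by
    intro y _
    obtain ⟨x, hx, hxy⟩ := hC y
    obtain ⟨S, hS, hSt⟩ := exists_subset_card_eq hxy
    refine mem_biUnion.mpr
      ⟨(x, S), mem_product.mpr ⟨hx, mem_powersetCard.mpr ⟨subset_univ S, hSt⟩⟩, ?_⟩
    simpa using fun i hi ↦ ((mem_filter.mp (hS hi)).2).symm
  have hcount : q ^ t * q ^ (n - t) ≤ #C * n.choose t * q ^ (n - t) := calc
    q ^ t * q ^ (n - t) = #(univ : Finset (ι → α)) := by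
      rw [← pow_add, Nat.add_sub_cancel' htn, card_univ, Fintype.card_fun]
    _ ≤ ∑ p ∈ C ×ˢ powersetCard t univ, #{y : ι → α | ∀ i ∈ p.2, y i = p.1 i} :=
      (card_le_card hcover).trans card_biUnion_le
    _ = #C * n.choose t * q ^ (n - t) := by
      rw [sum_congr rfl fun p hp ↦ by
        rw [card_filter_forall_mem_eq_pow, (mem_powersetCard.mp (mem_product.mp hp).2).2]]
      rw [sum_const, card_product, card_powersetCard, card_univ, smul_eq_mul]
  exact Nat.le_of_mul_le_mul_right hcount (pow_pos Fintype.card_pos _)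

theorem exists_code_log_card_ge [Nonempty α] {s : ℝ} (hs : 1 ≤ s) :
    ∃ C : Finset (ι → α),
      (∀ x ∈ C, ∀ y ∈ C, x ≠ y → Fintype.card ι * (1 - 1 / s) ≤ (hammingDist x y : ℝ)) ∧
      Fintype.card ι * (log (Fintype.card α / s) - 1) / s ≤ log #C := by
  set n := Fintype.card ι
  set d : ℝ := n * (1 - 1 / s) with hd
  have : Std.Symm fun x y : ι → α ↦ d ≤ hammingDist x y :=
    ⟨fun x y h ↦ by rwa [hammingDist_comm]⟩
  obtain ⟨C, hdist, hmax⟩ := exists_maximal_pairwise fun x y : ι → α ↦ d ≤ hammingDist x y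
  refine ⟨C, fun x hx y hy hxy ↦ hdist hx hy hxy, ?_⟩
  set t := ⌈n / s⌉₊
  have hs0 : 0 < s := zero_lt_one.trans_le hs
  have hagree : ∀ y : ι → α, ∃ x ∈ C, t ≤ #{i | x i = y i} := by
    intro y
    by_cases hy : y ∈ C
    · refine ⟨y, hy, Nat.ceil_le.mpr ?_⟩
      simpa using div_le_self (Nat.cast_nonneg n) hs
    obtain ⟨x, hx, hxy⟩ := hmax y hy
    refine ⟨x, hx, Nat.ceil_le.mpr ?_⟩
    have hsum : (#{i | x i = y i} : ℝ) + hammingDist x y = n := by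
      exact_mod_cast card_filter_eq_add_hammingDist x y
    rw [not_le, hd, mul_one_sub, mul_one_div] at hxy
    linarith
  have hlog := mul_log_div_sub_one_le_log_of_pow_le_mul_choose Fintype.card_pos hs0
    (by rw [← div_le_iff₀' hs0]; exact Nat.le_ceil _) (pow_card_le_card_mul_choose hagree)
  rcases le_or_gt (log (Fintype.card α / s)) 1 with hL | hL
  · exact (div_nonpos_of_nonpos_of_nonneg (mul_nonpos_of_nonneg_of_nonpos n.cast_nonneg
      (by linarith)) hs0.le).trans (log_natCast_nonneg _)
  · calc n * (log (Fintype.card α / s) - 1) / s = n / s * (log (Fintype.card α / s) - 1) := by ring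
      _ ≤ t * (log (Fintype.card α / s) - 1) := by gcongr; exact Nat.le_ceil _
      _ ≤ log #C := hlog

end Hamming

theorem gv_code_rate_general (q m : ℕ) (s : ℝ) (hq : 2 ≤ q) (hs1 : 1 < s) :
    ∃ C : Finset (Fin m → Fin q),
      (∀ x ∈ C, ∀ y ∈ C, x ≠ y → (m : ℝ) * (1 - 1 / s) ≤ (hammingDist x y : ℝ)) ∧
      (m : ℝ) * (Real.log ((q : ℝ) / s) - 1) / s ≤ Real.log (C.card : ℝ) ∧
      (1 < Real.log ((q : ℝ) / s) → ∀ N : ℕ, C.card = N →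
        (m : ℝ) ≤ s * Real.log (N : ℝ) / (Real.log ((q : ℝ) / s) - 1)) := by
  have : Nonempty (Fin q) := ⟨⟨0, by omega⟩⟩
  obtain ⟨C, hdist, hlog⟩ := exists_code_log_card_ge (ι := Fin m) (α := Fin q) hs1.le
  simp only [Fintype.card_fin] at hdist hlog
  refine ⟨C, hdist, hlog, fun hL N hN ↦ ?_⟩
  have hs0 : 0 < s := by linarith
  rw [le_div_iff₀ (by linarith), ← div_le_iff₀' hs0, ← hN]
  exact hlog

/-- for integers `q ≥ 2`, `m ≥ 1` and a real `1 < s < q`, there is a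
`q`-ary code of length `m` with pairwise distance at least `m(1 − 1/s)` and
`ln|C| ≥ m(ln(q/s) − 1)/s`; in particular if `ln(q/s) > 1` and `|C| = N` then
`m ≤ s·ln N/(ln(q/s) − 1)`. -/
theorem gv_code_rate (q m : ℕ) (s : ℝ) (hq : 2 ≤ q) (hm : 1 ≤ m)
    (hs1 : 1 < s) (hsq : s < (q : ℝ)) :
    ∃ C : Finset (Fin m → Fin q),
      (∀ x ∈ C, ∀ y ∈ C, x ≠ y → (m : ℝ) * (1 - 1 / s) ≤ (hammingDist x y : ℝ)) ∧
      (m : ℝ) * (Real.log ((q : ℝ) / s) - 1) / s ≤ Real.log (C.card : ℝ) ∧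
      (1 < Real.log ((q : ℝ) / s) → ∀ N : ℕ, C.card = N →
        (m : ℝ) ≤ s * Real.log (N : ℝ) / (Real.log ((q : ℝ) / s) - 1)) :=
  gv_code_rate_general q m s hq hs1
end

section
/- Let q ≥ 2 be an integer, s a real number with 1 < s < q and ln(q/s) > 1, and N ≥ 2 an integer. Then there exist an integer m with m ≤ ⌈s·ln N / (ln(q/s) − 1)⌉ and a set C of N binary vectors of length M = qm, each of Hamming weight exactly m = M/q, such that distinct vectors of C have pairwise Hamming distance at least 2m(1 − 1/s); i.e., C is an (M, N, 2(M/q)(1 − 1/s), M/q) constant-weight binary code with M/q ≤ ⌈s·ln N / (ln(q/s) − 1)⌉. -/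
/-!
A Gilbert–Varshamov argument with a weighted count. A maximal `q`-ary code `C` of length `m`
with pairwise distances `> r` covers every word within distance `r`; weighting each pair
`(x, c)` by `t ^ d(x, c)` with `0 ≤ t ≤ 1` gives `q^m t^r ≤ |C| (1 + (q - 1) t)^m`. For
`t = (s - 1)/q` and `r = ⌊m (1 - 1/s)⌋`, the bound `x log x ≥ x - 1` at `x = 1 - 1/s` shows that
`m ≥ s log N / (log (q/s) - 1)` forces `|C| ≥ N`. Writing each symbol as its indicator vector in
`{0,1}^q` then gives binary words of length `qm` and weight `m`, with all distances
doubled.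
-/

open Finset Function Real

section Hamming

variable {ι α : Type*} [Fintype ι] [DecidableEq ι] [Fintype α] [DecidableEq α]

theorem sum_pow_hammingDist {R : Type*} [CommRing R] (c : ι → α) (t : R) :
    ∑ x : ι → α, t ^ hammingDist x c = (1 + (Fintype.card α - 1) * t) ^ Fintype.card ι := by
  have hprod (x : ι → α) : t ^ hammingDist x c = ∏ i, if x i = c i then 1 else t := by
    rw [hammingDist, prod_ite, prod_const_one, prod_const, one_mul]
  have hsum (i : ι) : ∑ a : α, (if a = c i then 1 else t) = 1 + (Fintype.card α - 1) * t := by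
    have hsplit (a : α) : (if a = c i then 1 else t) = t + if a = c i then 1 - t else 0 := by
      split_ifs <;> ring
    simp only [hsplit, sum_add_distrib, sum_const, card_univ, nsmul_eq_mul, sum_ite_eq', mem_univ,
      if_true]
    ring
  simp only [hprod, ← Fintype.prod_sum (fun i a => if a = c i then 1 else t), hsum, prod_const,
    card_univ]

theorem card_pow_mul_pow_le_of_covering {R : Type*} [CommRing R] [LinearOrder R]
    [IsStrictOrderedRing R] {C : Finset (ι → α)} {r : ℕ}
    (hC : ∀ x, ∃ c ∈ C, hammingDist x c ≤ r) {t : R} (ht0 : 0 ≤ t) (ht1 : t ≤ 1) :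
    (Fintype.card α : R) ^ Fintype.card ι * t ^ r
      ≤ #C * (1 + (Fintype.card α - 1) * t) ^ Fintype.card ι :=
  calc (Fintype.card α : R) ^ Fintype.card ι * t ^ r = ∑ _x : ι → α, t ^ r := by simp
    _ ≤ ∑ x : ι → α, ∑ c ∈ C, t ^ hammingDist x c := by
        refine sum_le_sum fun x _ => ?_
        obtain ⟨c, hcC, hxc⟩ := hC x
        exact (pow_le_pow_of_le_one ht0 ht1 hxc).trans
          (single_le_sum (fun c _ => pow_nonneg ht0 _) hcC)
    _ = ∑ c ∈ C, ∑ x : ι → α, t ^ hammingDist x c := sum_comm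
    _ = #C * (1 + (Fintype.card α - 1) * t) ^ Fintype.card ι := by
        simp [sum_pow_hammingDist]

theorem exists_pairwise_lt_hammingDist_covering (r : ℕ) :
    ∃ C : Finset (ι → α), (C : Set (ι → α)).Pairwise (fun x y => r < hammingDist x y) ∧
      ∀ x, ∃ c ∈ C, hammingDist x c ≤ r := by
  classical
  obtain ⟨C, hC, hmax⟩ := exists_max_image
    ({C | (C : Set (ι → α)).Pairwise (r < hammingDist · ·)} : Finset (Finset (ι → α)))
    card ⟨∅, by simp⟩
  rw [mem_filter] at hC
  refine ⟨C, hC.2, fun x => ?_⟩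
  by_contra! hfar
  have hx : x ∉ C := fun hx => by simpa using hfar x hx
  have hins : ((insert x C : Finset _) : Set (ι → α)).Pairwise (r < hammingDist · ·) := by
    rw [coe_insert]
    exact hC.2.insert fun c hc _ => ⟨hfar c hc, hammingDist_comm x c ▸ hfar c hc⟩
  have := hmax _ (mem_filter.mpr ⟨mem_univ _, hins⟩)
  rw [card_insert_of_notMem hx] at this
  omega

theorem exists_injective_pairwise_lt_hammingDist [Nonempty α] {N r : ℕ} {t : ℝ}
    (ht0 : 0 ≤ t) (ht1 : t ≤ 1)
    (hN : N * (1 + (Fintype.card α - 1) * t) ^ Fintype.card ι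
      ≤ (Fintype.card α : ℝ) ^ Fintype.card ι * t ^ r) :
    ∃ u : Fin N → ι → α, Injective u ∧ Pairwise fun i j => r < hammingDist (u i) (u j) := by
  obtain ⟨C, hCdist, hCcover⟩ :=
    exists_pairwise_lt_hammingDist_covering (ι := ι) (α := α) r
  have hvol : 0 < (1 + (Fintype.card α - 1) * t : ℝ) ^ Fintype.card ι := by
    have : (1 : ℝ) ≤ Fintype.card α := by exact_mod_cast Fintype.card_pos
    positivity
  have hNC : N ≤ #C := by
    exact_mod_cast le_of_mul_le_mul_right
      (hN.trans (card_pow_mul_pow_le_of_covering hCcover ht0 ht1)) hvol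
  let u : Fin N → ι → α := fun i => C.equivFin.symm (Fin.castLE hNC i)
  have hu : Injective u :=
    Subtype.val_injective.comp (C.equivFin.symm.injective.comp (Fin.castLE_injective hNC))
  exact ⟨u, hu, fun i j hij => hCdist (C.equivFin.symm _).2 (C.equivFin.symm _).2 (hu.ne hij)⟩

end Hamming

theorem hammingDist_prod_eq_sum {α ι β : Type*} [Fintype α] [Fintype ι] [DecidableEq β]
    (f g : α × ι → β) :
    hammingDist f g = ∑ i, hammingDist (fun a => f (a, i)) (fun a => g (a, i)) := by
  simp only [hammingDist, card_filter]
  exact Fintype.sum_prod_type_right _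

theorem card_filter_comp_equiv {κ β : Type*} [Fintype κ] [Fintype β] (e : κ ≃ β)
    (p : β → Prop) [DecidablePred p] : #{k | p (e k)} = #{b | p b} :=
  card_equiv e (by simp)

theorem hammingDist_comp_equiv {κ ι β : Type*} [Fintype κ] [Fintype ι] [DecidableEq β]
    (e : κ ≃ ι) (x y : ι → β) : hammingDist (x ∘ e) (y ∘ e) = hammingDist x y :=
  card_filter_comp_equiv e fun i => x i ≠ y i

section OneHot

variable {ι α : Type*} [DecidableEq α]

def oneHot (u : ι → α) : α × ι → Bool := fun p => decide (u p.2 = p.1)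

theorem oneHot_injective : Injective (oneHot : (ι → α) → α × ι → Bool) := fun u v huv =>
  funext fun i => by simpa [oneHot, eq_comm] using congrFun huv (u i, i)

variable [Fintype ι] [Fintype α]

theorem card_filter_oneHot (u : ι → α) : #{p | oneHot u p} = Fintype.card ι := by
  rw [card_filter, Fintype.sum_prod_type_right]
  simp [oneHot]

theorem hammingDist_decide_eq (x y : α) :
    hammingDist (fun a => decide (x = a)) (fun a => decide (y = a)) = if x = y then 0 else 2 := by
  split_ifs with hxy
  · simp [hxy]
  · rw [hammingDist, ← card_pair hxy]
    congr 1
    ext a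
    by_cases hx : x = a <;> by_cases hy : y = a <;> simp_all [eq_comm]

theorem hammingDist_oneHot (u v : ι → α) :
    hammingDist (oneHot u) (oneHot v) = 2 * hammingDist u v := by
  rw [hammingDist_prod_eq_sum, hammingDist, card_filter, mul_sum]
  refine sum_congr rfl fun i _ => ?_
  simp only [oneHot, hammingDist_decide_eq]
  split_ifs <;> simp_all

end OneHot

theorem log_div_sub_one_div_le {q s : ℝ} (hq : 0 < q) (hs : 1 < s) :
    (log (q / s) - 1) / s ≤ log (q / s) + (1 - 1 / s) * log ((s - 1) / q) := by
  have hs0 : 0 < s := by linarith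
  have hs1 : 0 < 1 - 1 / s := by rw [sub_pos, div_lt_one hs0]; exact hs
  have hsplit : log ((s - 1) / q) = log (1 - 1 / s) - log (q / s) := by
    rw [← log_div hs1.ne' (by positivity)]
    congr 1
    field_simp
  have hent : (1 - 1 / s) - 1 ≤ (1 - 1 / s) * log (1 - 1 / s) := self_sub_one_le_mul_log hs1.le
  have hid : (log (q / s) - 1) / s
      = log (q / s) - (1 - 1 / s) * log (q / s) + ((1 - 1 / s) - 1) := by
    field_simp; ring
  rw [hsplit, hid]
  linarith

theorem natCast_mul_pow_le_pow_mul_pow {q s : ℝ} {N m r : ℕ} (hq : 0 < q) (hs : 1 < s)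
    (hlog : 1 < log (q / s))
    (hm : s * log N / (log (q / s) - 1) ≤ m) (hr : r ≤ m * (1 - 1 / s)) :
    N * s ^ m ≤ q ^ m * ((s - 1) / q) ^ r := by
  have hs0 : 0 < s := by linarith
  have hqs : s < q := (one_lt_div hs0).1 ((log_pos_iff (by positivity)).1 (by linarith))
  have ht0 : 0 < (s - 1) / q := div_pos (by linarith) hq
  have hlogt : log ((s - 1) / q) ≤ 0 :=
    log_nonpos ht0.le ((div_le_one hq).2 (by linarith))
  have hlogN : log N ≤ m * ((log (q / s) - 1) / s) := by
    rw [div_le_iff₀ (by linarith)] at hm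
    rw [mul_div_assoc', le_div_iff₀ hs0]
    linarith
  have hexp : log N ≤ m * log (q / s) + r * log ((s - 1) / q) := by
    have := mul_le_mul_of_nonneg_left (log_div_sub_one_div_le hq hs) (Nat.cast_nonneg m)
    nlinarith
  have hrhs :
      q ^ m * ((s - 1) / q) ^ r = s ^ m * exp (m * log (q / s) + r * log ((s - 1) / q)) := by
    rw [exp_add, ← log_pow, ← log_pow, exp_log (by positivity), exp_log (by positivity),
      div_pow, div_pow]
    field_simp
  rw [hrhs, mul_comm (N : ℝ)]
  exact mul_le_mul_of_nonneg_left ((le_exp_log _).trans (exp_le_exp.2 hexp)) (by positivity)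

theorem exists_qary_code {q N m : ℕ} {s : ℝ} (hs : 1 < s) (hlog : 1 < log (q / s))
    (hm : s * log N / (log (q / s) - 1) ≤ m) :
    ∃ u : Fin N → Fin m → Fin q,
      Injective u ∧ Pairwise fun i j => m * (1 - 1 / s) < hammingDist (u i) (u j) := by
  have hq0 : q ≠ 0 := by
    rintro rfl
    norm_num at hlog
  have : NeZero q := ⟨hq0⟩
  have hq1 : (1 : ℝ) ≤ q := by exact_mod_cast Nat.one_le_iff_ne_zero.2 hq0
  have hq : (0 : ℝ) < q := by linarith
  have hsq : s < q := (one_lt_div (by linarith)).1 ((log_pos_iff (by positivity)).1 (by linarith))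
  have h1s : 0 ≤ 1 - 1 / s := by rw [sub_nonneg, div_le_one (by linarith)]; exact hs.le
  have ht0 : 0 ≤ (s - 1) / q := div_nonneg (by linarith) hq.le
  have ht1 : (s - 1) / q ≤ 1 := (div_le_one hq).2 (by linarith)
  have hvol : 1 + (q - 1) * ((s - 1) / q) ≤ s := by
    rw [mul_div_assoc', ← sub_nonneg]; field_simp; nlinarith
  have hr := Nat.floor_le (mul_nonneg m.cast_nonneg h1s)
  have hcount := natCast_mul_pow_le_pow_mul_pow hq hs hlog hm hr
  obtain ⟨u, hu, hdist⟩ := exists_injective_pairwise_lt_hammingDist (ι := Fin m) (α := Fin q)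
    ht0 ht1 (N := N) <| by
      simpa only [Fintype.card_fin] using (mul_le_mul_of_nonneg_left
        (pow_le_pow_left₀ (by nlinarith) hvol m) (Nat.cast_nonneg N)).trans hcount
  exact ⟨u, hu, fun i j hij => Nat.floor_lt (mul_nonneg m.cast_nonneg h1s) |>.1 (hdist hij)⟩

theorem constant_weight_code_exists_general (q N : ℕ) (s : ℝ)
    (hs1 : 1 < s) (hlog : 1 < Real.log ((q : ℝ) / s)) :
    ∃ (m : ℕ) (c : Fin N → Fin (q * m) → Bool),
      m ≤ ⌈s * Real.log (N : ℝ) / (Real.log ((q : ℝ) / s) - 1)⌉₊ ∧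
      Function.Injective c ∧
      (∀ i, (Finset.univ.filter (fun j => c i j = true)).card = m) ∧
      ∀ i j, i ≠ j →
        2 * (m : ℝ) * (1 - 1 / s) ≤ (hammingDist (c i) (c j) : ℝ) := by
  obtain ⟨u, hu, hdist⟩ := exists_qary_code (N := N) hs1 hlog (Nat.le_ceil _)
  refine ⟨_, fun i => oneHot (u i) ∘ finProdFinEquiv.symm, le_rfl,
    finProdFinEquiv.symm.surjective.injective_comp_right.comp (oneHot_injective.comp hu),
    fun i => ?_, fun i j hij => ?_⟩
  · exact (card_filter_comp_equiv _ _).trans ((card_filter_oneHot _).trans (Fintype.card_fin _))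
  · rw [hammingDist_comp_equiv, hammingDist_oneHot, Nat.cast_mul, Nat.cast_two, mul_assoc]
    exact mul_le_mul_of_nonneg_left (hdist hij).le zero_le_two

/-- Proposition on constant-weight codes from GV codes: for an integer
`q ≥ 2`, a real `1 < s < q` with `ln(q/s) > 1`, and `N ≥ 2`, there is an
`(M, N, 2(M/q)(1 − 1/s), M/q)` constant-weight binary code with `M = qm` and
`m = M/q ≤ ⌈s·ln N/(ln(q/s) − 1)⌉`. -/
theorem constant_weight_code_exists (q N : ℕ) (s : ℝ) (hq : 2 ≤ q) (hN : 2 ≤ N)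
    (hs1 : 1 < s) (hsq : s < (q : ℝ)) (hlog : 1 < Real.log ((q : ℝ) / s)) :
    ∃ (m : ℕ) (c : Fin N → Fin (q * m) → Bool),
      m ≤ ⌈s * Real.log (N : ℝ) / (Real.log ((q : ℝ) / s) - 1)⌉₊ ∧
      Function.Injective c ∧
      (∀ i, (Finset.univ.filter (fun j => c i j = true)).card = m) ∧
      ∀ i j, i ≠ j →
        2 * (m : ℝ) * (1 - 1 / s) ≤ (hammingDist (c i) (c j) : ℝ) :=
  constant_weight_code_exists_general q N s hs1 hlog
end

section
/- There exists an absolute constant c > 0 such that for all integers N > t ≥ 2 and every ε ∈ (0,1), there exists an M×N binary matrix that is (t,ε)-disjunct with M ≤ c·(t/ln t)·ln N·ln(N/ε). -/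
open Finset


/-- Number of rows `g` with `g i = 0` and `g k ≠ 0` for all `k ∈ J`. -/
lemma row_count (N q : ℕ) [NeZero q] (i : Fin N) (J : Finset (Fin N)) (hi : i ∉ J) :
    (Finset.univ.filter (fun g : Fin N → Fin q => g i = 0 ∧ ∀ k ∈ J, g k ≠ 0)).card
      = (q - 1) ^ J.card * q ^ (N - 1 - J.card) := by
  classical
  have hset : Finset.univ.filter (fun g : Fin N → Fin q => g i = 0 ∧ ∀ k ∈ J, g k ≠ 0)
      = Fintype.piFinset (fun k => if k = i then {0} else if k ∈ J then {0}ᶜ else Finset.univ) := by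
    ext g
    simp only [mem_filter, mem_univ, true_and, Fintype.mem_piFinset]
    constructor
    · rintro ⟨h0, hJ⟩ k
      by_cases hk : k = i
      · simp [hk, h0]
      · by_cases hkJ : k ∈ J
        · simp [hk, hkJ, hJ k hkJ]
        · simp [hk, hkJ]
    · intro h
      constructor
      · have := h i; simpa using this
      · intro k hk
        have hki : k ≠ i := fun e => hi (e ▸ hk)
        have := h k
        simp [hki, hk] at this
        exact this
  rw [hset, Fintype.card_piFinset]
  rw [← Finset.prod_mul_prod_compl (insert i J)]
  have h1 : (∏ k ∈ insert i J,
      (if k = i then ({0} : Finset (Fin q)) else if k ∈ J then {0}ᶜ else Finset.univ).card)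
      = (q - 1) ^ J.card := by
    rw [Finset.prod_insert hi]
    have hcong : ∀ k ∈ J,
        (if k = i then ({0} : Finset (Fin q)) else if k ∈ J then {0}ᶜ else Finset.univ).card
          = q - 1 := by
      intro k hk
      have hki : k ≠ i := fun e => hi (e ▸ hk)
      simp [hki, hk, Finset.card_compl]
    rw [Finset.prod_congr rfl hcong, Finset.prod_const]
    simp
  have h2 : (∏ k ∈ (insert i J)ᶜ,
      (if k = i then ({0} : Finset (Fin q)) else if k ∈ J then {0}ᶜ else Finset.univ).card)
      = q ^ (N - 1 - J.card) := by
    have hcong : ∀ k ∈ (insert i J)ᶜ,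
        (if k = i then ({0} : Finset (Fin q)) else if k ∈ J then {0}ᶜ else Finset.univ).card
          = q := by
      intro k hk
      simp only [Finset.mem_compl, Finset.mem_insert, not_or] at hk
      simp [hk.1, hk.2, Finset.card_univ]
    rw [Finset.prod_congr rfl hcong, Finset.prod_const]
    congr 1
    rw [Finset.card_compl, Finset.card_insert_of_notMem hi]
    simp [Nat.sub_sub, Nat.add_comm]
  rw [h1, h2]

lemma mat_count {α : Type*} [Fintype α] [DecidableEq α] (M : ℕ) (p : α → Prop) [DecidablePred p] :
    (Finset.univ.filter (fun A : Fin M → α => ∀ r, p (A r))).card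
      = (Finset.univ.filter p).card ^ M := by
  classical
  have : Finset.univ.filter (fun A : Fin M → α => ∀ r, p (A r))
      = Fintype.piFinset (fun _ : Fin M => Finset.univ.filter p) := by
    ext A; simp [Fintype.mem_piFinset]
  rw [this, Fintype.card_piFinset]
  simp

lemma exists_good_matrix (N t M : ℕ) [NeZero t] (htN : t < N) (ε : ℝ)
    (hlt : (N : ℝ) * ((t ^ N - (t - 1) ^ t * t ^ (N - 1 - t) : ℕ) : ℝ) ^ M
        < ε * ((t : ℝ) ^ N) ^ M) :
    ∃ A : Fin M → Fin N → Fin t,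
      ((Finset.univ.filter (fun J : Finset (Fin N) => J.card = t ∧
        ∃ i ∉ J, ∀ r, A r i = 0 → ∃ k ∈ J, A r k = 0)).card : ℝ) ≤ ε * (N.choose t) := by
  classical
  by_contra hcon
  push_neg at hcon
  set covC : ℕ := t ^ N - (t - 1) ^ t * t ^ (N - 1 - t) with hcovC
  -- per-row count
  have hrow : ∀ (i : Fin N) (J : Finset (Fin N)), i ∉ J → J.card = t →
      (Finset.univ.filter (fun g : Fin N → Fin t => g i = 0 → ∃ k ∈ J, g k = 0)).card = covC := by
    intro i J hi hJ
    have hpart := Finset.card_filter_add_card_filter_not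
      (s := (Finset.univ : Finset (Fin N → Fin t)))
      (fun g : Fin N → Fin t => g i = 0 → ∃ k ∈ J, g k = 0)
    have hneg : (Finset.univ.filter
        (fun g : Fin N → Fin t => ¬ (g i = 0 → ∃ k ∈ J, g k = 0))).card
        = (t - 1) ^ t * t ^ (N - 1 - t) := by
      have : (Finset.univ.filter
          (fun g : Fin N → Fin t => ¬ (g i = 0 → ∃ k ∈ J, g k = 0)))
          = (Finset.univ.filter (fun g : Fin N → Fin t => g i = 0 ∧ ∀ k ∈ J, g k ≠ 0)) := by
        apply Finset.filter_congr
        intro g _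
        constructor
        · intro h
          push_neg at h
          exact h
        · intro h
          push_neg
          exact h
      rw [this, row_count N t i J hi, hJ]
    have huniv : (Finset.univ : Finset (Fin N → Fin t)).card = t ^ N := by
      simp [Finset.card_univ]
    rw [hneg, huniv] at hpart
    rw [hcovC]
    exact Nat.eq_sub_of_add_eq hpart
  -- per-(i,J) matrix count
  have hmatIJ : ∀ (i : Fin N) (J : Finset (Fin N)), i ∉ J → J.card = t →
      (Finset.univ.filter (fun A : Fin M → Fin N → Fin t =>
        ∀ r, A r i = 0 → ∃ k ∈ J, A r k = 0)).card = covC ^ M := by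
    intro i J hi hJ
    rw [mat_count M (fun g : Fin N → Fin t => g i = 0 → ∃ k ∈ J, g k = 0), hrow i J hi hJ]
  set allT : Finset (Finset (Fin N)) := Finset.univ.filter (fun J => J.card = t) with hallT
  have hallTcard : allT.card = N.choose t := by
    rw [hallT, ← Finset.powerset_univ, ← Finset.powersetCard_eq_filter,
      Finset.card_powersetCard, Finset.card_univ, Fintype.card_fin]
  -- per-J union bound
  have hJbound : ∀ J ∈ allT,
      (Finset.univ.filter (fun A : Fin M → Fin N → Fin t =>
        ∃ i ∉ J, ∀ r, A r i = 0 → ∃ k ∈ J, A r k = 0)).card ≤ N * covC ^ M := by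
    intro J hJmem
    have hJ : J.card = t := (Finset.mem_filter.mp hJmem).2
    have hsub : (Finset.univ.filter (fun A : Fin M → Fin N → Fin t =>
        ∃ i ∉ J, ∀ r, A r i = 0 → ∃ k ∈ J, A r k = 0))
        ⊆ Jᶜ.biUnion (fun i => Finset.univ.filter (fun A : Fin M → Fin N → Fin t =>
            ∀ r, A r i = 0 → ∃ k ∈ J, A r k = 0)) := by
      intro A hA
      obtain ⟨i, hi, hAi⟩ := (Finset.mem_filter.mp hA).2
      exact Finset.mem_biUnion.mpr ⟨i, Finset.mem_compl.mpr hi,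
        Finset.mem_filter.mpr ⟨Finset.mem_univ A, hAi⟩⟩
    calc _ ≤ (Jᶜ.biUnion _).card := Finset.card_le_card hsub
      _ ≤ ∑ i ∈ Jᶜ, (Finset.univ.filter (fun A : Fin M → Fin N → Fin t =>
            ∀ r, A r i = 0 → ∃ k ∈ J, A r k = 0)).card := Finset.card_biUnion_le
      _ = ∑ i ∈ Jᶜ, covC ^ M := by
          apply Finset.sum_congr rfl
          intro i hi
          exact hmatIJ i J (Finset.mem_compl.mp hi) hJ
      _ = Jᶜ.card * covC ^ M := by rw [Finset.sum_const, smul_eq_mul]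
      _ ≤ N * covC ^ M := by
          apply Nat.mul_le_mul_right
          calc Jᶜ.card ≤ Fintype.card (Fin N) := Finset.card_le_univ _
            _ = N := Fintype.card_fin N
  -- the double counting
  set badOf : (Fin M → Fin N → Fin t) → Finset (Finset (Fin N)) :=
    fun A => Finset.univ.filter (fun J : Finset (Fin N) => J.card = t ∧
        ∃ i ∉ J, ∀ r, A r i = 0 → ∃ k ∈ J, A r k = 0) with hbadOf
  have hS : ∑ A : Fin M → Fin N → Fin t, (badOf A).card
      ≤ N.choose t * (N * covC ^ M) := by
    have hrew : ∀ A : Fin M → Fin N → Fin t, (badOf A).card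
        = ∑ J ∈ allT, if (∃ i ∉ J, ∀ r, A r i = 0 → ∃ k ∈ J, A r k = 0) then 1 else 0 := by
      intro A
      rw [hbadOf, ← Finset.card_filter]
      congr 1
      rw [hallT, Finset.filter_filter]
    calc ∑ A : Fin M → Fin N → Fin t, (badOf A).card
        = ∑ A : Fin M → Fin N → Fin t, ∑ J ∈ allT,
            if (∃ i ∉ J, ∀ r, A r i = 0 → ∃ k ∈ J, A r k = 0) then 1 else 0 := by
          exact Finset.sum_congr rfl (fun A _ => hrew A)
      _ = ∑ J ∈ allT, ∑ A : Fin M → Fin N → Fin t,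
            if (∃ i ∉ J, ∀ r, A r i = 0 → ∃ k ∈ J, A r k = 0) then 1 else 0 :=
          Finset.sum_comm
      _ = ∑ J ∈ allT, (Finset.univ.filter (fun A : Fin M → Fin N → Fin t =>
            ∃ i ∉ J, ∀ r, A r i = 0 → ∃ k ∈ J, A r k = 0)).card := by
          exact Finset.sum_congr rfl (fun J _ => (Finset.card_filter _ _).symm)
      _ ≤ ∑ J ∈ allT, N * covC ^ M := Finset.sum_le_sum hJbound
      _ = N.choose t * (N * covC ^ M) := by rw [Finset.sum_const, hallTcard, smul_eq_mul]
  -- lower bound from hcon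
  have hΩcard : (Fintype.card (Fin M → Fin N → Fin t) : ℝ) = ((t : ℝ) ^ N) ^ M := by
    simp [Fintype.card_fun]
  have hlow : ((t : ℝ) ^ N) ^ M * (ε * N.choose t)
      < ∑ A : Fin M → Fin N → Fin t, ((badOf A).card : ℝ) := by
    have hne : (Finset.univ : Finset (Fin M → Fin N → Fin t)).Nonempty :=
      Finset.univ_nonempty
    have := Finset.sum_lt_sum_of_nonempty hne
      (f := fun _ : Fin M → Fin N → Fin t => ε * N.choose t)
      (g := fun A => ((badOf A).card : ℝ)) (fun A _ => hcon A)
    calc ((t : ℝ) ^ N) ^ M * (ε * N.choose t)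
        = (Finset.univ : Finset (Fin M → Fin N → Fin t)).card • (ε * (N.choose t : ℝ)) := by
          rw [Finset.card_univ, nsmul_eq_mul, hΩcard]
      _ = ∑ _A : Fin M → Fin N → Fin t, (ε * (N.choose t : ℝ)) := by
          rw [Finset.sum_const]
      _ < _ := this
  have hchoosepos : (0 : ℝ) < N.choose t := by
    exact_mod_cast Nat.choose_pos (le_of_lt htN)
  have hSR : ∑ A : Fin M → Fin N → Fin t, ((badOf A).card : ℝ)
      ≤ (N.choose t : ℝ) * ((N : ℝ) * (covC : ℝ) ^ M) := by
    calc ∑ A : Fin M → Fin N → Fin t, ((badOf A).card : ℝ)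
        = ((∑ A : Fin M → Fin N → Fin t, (badOf A).card : ℕ) : ℝ) := (Nat.cast_sum _ _).symm
      _ ≤ ((N.choose t * (N * covC ^ M) : ℕ) : ℝ) := by exact_mod_cast hS
      _ = (N.choose t : ℝ) * ((N : ℝ) * (covC : ℝ) ^ M) := by push_cast; ring
  have hfin : (N.choose t : ℝ) * ((N : ℝ) * (covC : ℝ) ^ M)
      < (N.choose t : ℝ) * (ε * ((t : ℝ) ^ N) ^ M) :=
    mul_lt_mul_of_pos_left hlt hchoosepos
  have : ((t : ℝ) ^ N) ^ M * (ε * N.choose t) < (N.choose t : ℝ) * (ε * ((t : ℝ) ^ N) ^ M) :=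
    lt_of_lt_of_le (lt_of_lt_of_le hlow hSR) (le_of_lt hfin)
  linarith [this]


set_option maxHeartbeats 2000000 in
/-- main theorem, Model 2: there is an absolute constant `c > 0` such
that for all `N > t ≥ 2` and `ε ∈ (0,1)` there is an `M × N` binary `(t,ε)`-disjunct
matrix with `M ≤ c·(t/ln t)·ln N·ln(N/ε)`. -/
theorem explicit_almost_disjunct_matrices :
    ∃ c : ℝ, 0 < c ∧ ∀ (N t : ℕ) (ε : ℝ), 2 ≤ t → t < N → 0 < ε → ε < 1 →
      ∃ (M : ℕ) (A : Matrix (Fin M) (Fin N) Bool),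
        (M : ℝ) ≤ c * ((t : ℝ) / Real.log (t : ℝ)) * Real.log (N : ℝ) *
          Real.log ((N : ℝ) / ε) ∧
        (1 - ε) * (N.choose t : ℝ) ≤
          ((Finset.univ.filter (fun J : Finset (Fin N) => J.card = t ∧
            ∀ i ∉ J, ¬ (Finset.univ.filter (fun j => A j i = true) ⊆
              J.biUnion fun k => Finset.univ.filter (fun j => A j k = true)))).card : ℝ) := by
  classical
  refine ⟨9, by norm_num, ?_⟩
  intro N t ε ht htN hε hε1
  haveI : NeZero t := ⟨by omega⟩

  have hN3 : 3 ≤ N := by omega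
  set T : ℝ := (t : ℝ) with hT
  have hT2 : (2 : ℝ) ≤ T := by rw [hT]; exact_mod_cast ht
  have hT0 : (0 : ℝ) < T := by linarith
  set L : ℝ := Real.log ((N : ℝ) / ε) with hL
  have hNR : (3 : ℝ) ≤ (N : ℝ) := by exact_mod_cast hN3
  have hNε : Real.exp 1 < (N : ℝ) / ε := by
    have h1 : (N : ℝ) ≤ (N : ℝ) / ε := by
      rw [le_div_iff₀ hε]; nlinarith
    have := Real.exp_one_lt_d9
    nlinarith
  have hL1 : 1 < L := by
    have := Real.log_lt_log (Real.exp_pos 1) hNε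
    rwa [Real.log_exp] at this
  set M : ℕ := ⌈8 * T * L⌉₊ + 1 with hM
  have hMlb : 8 * T * L + 1 ≤ (M : ℝ) := by
    have := Nat.le_ceil (8 * T * L)
    push_cast [hM]
    linarith
  have hMub : (M : ℝ) ≤ 8 * T * L + 2 := by
    have h0 : (0:ℝ) ≤ 8 * T * L := by positivity
    have := Nat.ceil_lt_add_one h0
    push_cast [hM]
    linarith
  -- D ≤ t^N
  have hDle : (t - 1) ^ t * t ^ (N - 1 - t) ≤ t ^ N := by
    calc (t - 1) ^ t * t ^ (N - 1 - t) ≤ t ^ t * t ^ (N - 1 - t) :=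
          Nat.mul_le_mul_right _ (Nat.pow_le_pow_left (by omega) t)
      _ = t ^ (t + (N - 1 - t)) := (pow_add t t (N - 1 - t)).symm
      _ ≤ t ^ N := Nat.pow_le_pow_right (by omega) (by omega)
  set covC : ℕ := t ^ N - (t - 1) ^ t * t ^ (N - 1 - t) with hcovC
  have hcast : (covC : ℝ) = T ^ N - (T - 1) ^ t * T ^ (N - 1 - t) := by
    rw [hcovC]
    push_cast [Nat.cast_sub hDle, Nat.cast_sub (show 1 ≤ t by omega)]
    ring
  -- δ = ((T-1)/T)^t / T ≥ 1/(8T)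
  have hTpow : (0 : ℝ) < T ^ N := by positivity
  have hsplit : T ^ N = T ^ (N - 1 - t) * T ^ (t + 1) := by
    rw [← pow_add]
    congr 1
    omega
  have hratio : (T - 1) ^ t * T ^ (N - 1 - t) / T ^ N = ((T - 1) / T) ^ t / T := by
    rw [hsplit]
    rw [div_pow, pow_succ]
    field_simp
  have hexp : Real.exp (-(2 / T)) ≤ (T - 1) / T := by
    have h1 : 1 + 2 / T ≤ Real.exp (2 / T) := by
      have := Real.add_one_le_exp (2 / T)
      linarith
    have h2 : Real.exp (-(2 / T)) = 1 / Real.exp (2 / T) := by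
      rw [Real.exp_neg]; ring
    rw [h2]
    rw [div_le_div_iff₀ (Real.exp_pos _) hT0]
    have h3 : T ≤ (T - 1) * (1 + 2 / T) := by
      have he : (T - 1) * (1 + 2 / T) = (T - 1) * (T + 2) / T := by field_simp
      rw [he, le_div_iff₀ hT0]
      nlinarith
    calc 1 * T = T := one_mul T
      _ ≤ (T - 1) * (1 + 2 / T) := h3
      _ ≤ (T - 1) * Real.exp (2 / T) := by
          apply mul_le_mul_of_nonneg_left h1
          linarith
  have hpow2 : Real.exp (-2) ≤ ((T - 1) / T) ^ t := by
    have h0 : (0:ℝ) ≤ Real.exp (-(2/T)) := le_of_lt (Real.exp_pos _)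
    calc Real.exp (-2) = Real.exp (t * (-(2 / T))) := by
          congr 1
          rw [← hT]
          field_simp
      _ = Real.exp (-(2 / T)) ^ t := by rw [← Real.exp_nat_mul]
      _ ≤ ((T - 1) / T) ^ t := pow_le_pow_left₀ h0 hexp t
  have hexp2 : Real.exp (-2 : ℝ) ≥ 1 / 8 := by
    have he : Real.exp 2 ≤ 8 := by
      have h := Real.exp_one_lt_d9
      have h2 : Real.exp 2 = Real.exp 1 * Real.exp 1 := by rw [← Real.exp_add]; norm_num
      nlinarith [Real.exp_pos 1]
    rw [ge_iff_le, Real.exp_neg, one_div]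
    exact inv_anti₀ (Real.exp_pos 2) he
  have hδ : 1 / (8 * T) ≤ (T - 1) ^ t * T ^ (N - 1 - t) / T ^ N := by
    rw [hratio]
    rw [div_le_div_iff₀ (by positivity) hT0]
    have h18 : (1:ℝ)/8 ≤ ((T-1)/T)^t := le_trans hexp2 hpow2
    nlinarith [mul_le_mul_of_nonneg_right h18 (by positivity : (0:ℝ) ≤ 8*T)]
  -- remaining analytic facts
  set D : ℝ := (T - 1) ^ t * T ^ (N - 1 - t) with hD
  have hDT : D ≤ T ^ N := by
    have h0 : (0:ℝ) ≤ (covC : ℝ) := Nat.cast_nonneg _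
    rw [hcast] at h0
    linarith
  have hcovM : ((covC : ℝ)) ^ M ≤ Real.exp (-((M : ℝ) / (8 * T))) * (T ^ N) ^ M := by
    have h1 : (covC : ℝ) = (1 - D / T ^ N) * T ^ N := by
      rw [hcast]; field_simp
    have h2 : 1 - D / T ^ N ≤ Real.exp (-(1 / (8 * T))) := by
      have h5 := Real.add_one_le_exp (-(1 / (8 * T)))
      linarith [hδ]
    have h4 : (0:ℝ) ≤ 1 - D / T ^ N := by
      have : D / T ^ N ≤ 1 := by rw [div_le_one hTpow]; linarith
      linarith
    calc ((covC : ℝ)) ^ M = (1 - D / T ^ N) ^ M * (T ^ N) ^ M := by rw [h1, mul_pow]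
      _ ≤ (Real.exp (-(1 / (8 * T)))) ^ M * (T ^ N) ^ M := by
          exact mul_le_mul_of_nonneg_right (pow_le_pow_left₀ h4 h2 M) (by positivity)
      _ = Real.exp (-((M : ℝ) / (8 * T))) * (T ^ N) ^ M := by
          rw [← Real.exp_nat_mul]
          congr 1
          field_simp
  have hexpM : Real.exp (-((M : ℝ) / (8 * T))) < Real.exp (-L) := by
    apply Real.exp_lt_exp.mpr
    have hlt' : L < (M : ℝ) / (8 * T) := by
      rw [lt_div_iff₀ (by positivity)]
      nlinarith [hMlb]
    linarith
  have hexpL : Real.exp (-L) = ε / (N : ℝ) := by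
    rw [hL, Real.exp_neg, Real.exp_log (by positivity : (0:ℝ) < (N : ℝ) / ε), inv_div]
  have hNpos : (0:ℝ) < (N : ℝ) := by linarith
  have hlt : (N : ℝ) * ((covC : ℕ) : ℝ) ^ M < ε * ((t : ℝ) ^ N) ^ M := by
    calc (N : ℝ) * ((covC : ℕ) : ℝ) ^ M
        ≤ (N : ℝ) * (Real.exp (-((M : ℝ) / (8 * T))) * (T ^ N) ^ M) :=
          mul_le_mul_of_nonneg_left hcovM (by positivity)
      _ < (N : ℝ) * (Real.exp (-L) * (T ^ N) ^ M) := by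
          apply mul_lt_mul_of_pos_left _ hNpos
          exact mul_lt_mul_of_pos_right hexpM (by positivity)
      _ = ε * ((t : ℝ) ^ N) ^ M := by
          rw [hexpL, ← hT]
          field_simp
  -- invoke the existence lemma
  have hkey : (N : ℝ) * ((t ^ N - (t - 1) ^ t * t ^ (N - 1 - t) : ℕ) : ℝ) ^ M
      < ε * ((t : ℝ) ^ N) ^ M := by
    rw [← hcovC]
    exact_mod_cast hlt
  obtain ⟨A, hA⟩ := exists_good_matrix N t M htN ε hkey
  refine ⟨M, (fun r j => decide (A r j = 0)), ?_, ?_⟩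
  · -- M is small enough
    have hlogt : 0 < Real.log T := Real.log_pos (by linarith)
    have hlogN : Real.log T ≤ Real.log (N : ℝ) := by
      apply Real.log_le_log hT0
      rw [hT]
      exact_mod_cast le_of_lt htN
    have h1 : T ≤ T / Real.log T * Real.log (N : ℝ) := by
      rw [div_mul_eq_mul_div, le_div_iff₀ hlogt]
      nlinarith
    have hL0 : 0 < L := by linarith
    calc (M : ℝ) ≤ 8 * T * L + 2 := hMub
      _ ≤ 9 * (T * L) := by nlinarith
      _ ≤ 9 * ((T / Real.log T * Real.log (N : ℝ)) * L) := by nlinarith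
      _ = 9 * (T / Real.log T) * Real.log (N : ℝ) * L := by ring
  · -- the disjunctness count
    have hiff : ∀ (i : Fin N) (J : Finset (Fin N)),
        (Finset.univ.filter (fun j : Fin M => decide (A j i = 0) = true) ⊆
          J.biUnion fun k => Finset.univ.filter (fun j : Fin M => decide (A j k = 0) = true))
        ↔ (∀ r, A r i = 0 → ∃ k ∈ J, A r k = 0) := by
      intro i J
      simp [Finset.subset_iff]
    have hgood : (Finset.univ.filter (fun J : Finset (Fin N) => J.card = t ∧
        ∀ i ∉ J, ¬ (Finset.univ.filter (fun j : Fin M => decide (A j i = 0) = true) ⊆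
          J.biUnion fun k => Finset.univ.filter (fun j : Fin M => decide (A j k = 0) = true))))
        = Finset.univ.filter (fun J : Finset (Fin N) => J.card = t ∧
            ∀ i ∉ J, ¬ (∀ r, A r i = 0 → ∃ k ∈ J, A r k = 0)) := by
      apply Finset.filter_congr
      intro J _
      constructor
      · rintro ⟨h1, h2⟩
        exact ⟨h1, fun i hi hc => h2 i hi ((hiff i J).mpr hc)⟩
      · rintro ⟨h1, h2⟩
        exact ⟨h1, fun i hi hc => h2 i hi ((hiff i J).mp hc)⟩
    rw [hgood]
    -- partition count
    have hpart := Finset.card_filter_add_card_filter_not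
      (s := Finset.univ.filter (fun J : Finset (Fin N) => J.card = t))
      (fun J : Finset (Fin N) => ∀ i ∉ J, ¬ (∀ r, A r i = 0 → ∃ k ∈ J, A r k = 0))
    have hallTcard : (Finset.univ.filter (fun J : Finset (Fin N) => J.card = t)).card
        = N.choose t := by
      rw [← Finset.powerset_univ, ← Finset.powersetCard_eq_filter,
        Finset.card_powersetCard, Finset.card_univ, Fintype.card_fin]
    have e1 : Finset.univ.filter (fun J : Finset (Fin N) => J.card = t ∧
        ∀ i ∉ J, ¬ (∀ r, A r i = 0 → ∃ k ∈ J, A r k = 0))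
        = (Finset.univ.filter (fun J : Finset (Fin N) => J.card = t)).filter
            (fun J => ∀ i ∉ J, ¬ (∀ r, A r i = 0 → ∃ k ∈ J, A r k = 0)) := by
      rw [Finset.filter_filter]
    have e2 : Finset.univ.filter (fun J : Finset (Fin N) => J.card = t ∧
        ∃ i ∉ J, ∀ r, A r i = 0 → ∃ k ∈ J, A r k = 0)
        = (Finset.univ.filter (fun J : Finset (Fin N) => J.card = t)).filter
            (fun J => ¬ ∀ i ∉ J, ¬ (∀ r, A r i = 0 → ∃ k ∈ J, A r k = 0)) := by
      rw [Finset.filter_filter]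
      apply Finset.filter_congr
      intro J _
      constructor
      · rintro ⟨h1, i, hi, h⟩
        exact ⟨h1, fun hall => hall i hi h⟩
      · rintro ⟨h1, h⟩
        refine ⟨h1, ?_⟩
        by_contra hc
        push_neg at hc
        refine h (fun i hi hall => ?_)
        obtain ⟨r, hr0, hrk⟩ := hc i hi
        obtain ⟨k, hk, hk0⟩ := hall r hr0
        exact hrk k hk hk0
    rw [e1]
    rw [e2] at hA
    rw [hallTcard] at hpart
    have hble : ((Finset.univ.filter (fun J : Finset (Fin N) => J.card = t)).filter
        (fun J => ¬ ∀ i ∉ J, ¬ (∀ r, A r i = 0 → ∃ k ∈ J, A r k = 0))).card ≤ N.choose t := by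
      omega
    have := hA
    have hcast2 : ((((Finset.univ.filter (fun J : Finset (Fin N) => J.card = t)).filter
        (fun J => ∀ i ∉ J, ¬ (∀ r, A r i = 0 → ∃ k ∈ J, A r k = 0))).card : ℝ))
        = (N.choose t : ℝ) - (((Finset.univ.filter (fun J : Finset (Fin N) => J.card = t)).filter
        (fun J => ¬ ∀ i ∉ J, ¬ (∀ r, A r i = 0 → ∃ k ∈ J, A r k = 0))).card : ℝ) := by
      have : ((Finset.univ.filter (fun J : Finset (Fin N) => J.card = t)).filter
          (fun J => ∀ i ∉ J, ¬ (∀ r, A r i = 0 → ∃ k ∈ J, A r k = 0))).card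
          = N.choose t - ((Finset.univ.filter (fun J : Finset (Fin N) => J.card = t)).filter
          (fun J => ¬ ∀ i ∉ J, ¬ (∀ r, A r i = 0 → ∃ k ∈ J, A r k = 0))).card := by omega
      rw [this, Nat.cast_sub hble]
    rw [hcast2]
    linarith
end
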